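/- arXiv:1612.05554 — 9 statements merged into one kernel-verified Lean document; each statement's English description precedes it below -/
import Mathlib

section
/- Let E be a CPTP map on the d×d complex matrices with Kraus operators {M_k} which is unital, i.e. E(I) = I. Then fix(E) = fix(E†), and both coincide with the commutant of the Kraus operators: a matrix X satisfies E(X) = X if and only if X M_k = M_k X and X M_k* = M_k* X for all k. In particular, fix(E) is a subalgebra of M_d closed under adjoints and matrix products. -/
open Matrix
open scoped ComplexOrder

private lemma eq_zero_of_sum_trace' {d m : ℕ} (A : Fin m → Matrix (Fin d) (Fin d) ℂ)
    (h : ∑ k, ((A k)ᴴ * (A k)).trace = 0) : ∀ k, A k = 0 := by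
  have tr : ∀ (B : Matrix (Fin d) (Fin d) ℂ),
      (Bᴴ * B).trace = ↑(∑ i, ∑ j, Complex.normSq (B j i)) := by
    intro B
    push_cast
    simp only [trace, Matrix.mul_apply, diag, conjTranspose_apply, Finset.sum_apply]
    congr 1; funext i; congr 1; funext j
    rw [Complex.normSq_eq_conj_mul_self]
    rfl
  have h' : ∑ k, ∑ i, ∑ j, Complex.normSq (A k j i) = 0 := by
    have := h
    simp only [tr] at this
    exact_mod_cast this
  intro k
  ext i j
  have hnn : ∀ k ∈ Finset.univ, (0:ℝ) ≤ ∑ i, ∑ j, Complex.normSq (A k j i) := by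
    intro k _; exact Finset.sum_nonneg fun _ _ => Finset.sum_nonneg fun _ _ => Complex.normSq_nonneg _
  have := (Finset.sum_eq_zero_iff_of_nonneg hnn).mp h' k (Finset.mem_univ k)
  have hnn2 : ∀ i' ∈ (Finset.univ : Finset (Fin d)), (0:ℝ) ≤ ∑ j, Complex.normSq (A k j i') := by
    intro i' _; exact Finset.sum_nonneg fun _ _ => Complex.normSq_nonneg _
  have := (Finset.sum_eq_zero_iff_of_nonneg hnn2).mp this j (Finset.mem_univ j)
  have hnn3 : ∀ j' ∈ (Finset.univ : Finset (Fin d)), (0:ℝ) ≤ Complex.normSq (A k j' j) := by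
    intro j' _; exact Complex.normSq_nonneg _
  have := (Finset.sum_eq_zero_iff_of_nonneg hnn3).mp this i (Finset.mem_univ i)
  simpa using Complex.normSq_eq_zero.mp this

private lemma key_commute {d m : ℕ} (M : Fin m → Matrix (Fin d) (Fin d) ℂ)
    (hTP : ∑ k, (M k)ᴴ * M k = 1) (hU : ∑ k, M k * (M k)ᴴ = 1)
    (X : Matrix (Fin d) (Fin d) ℂ)
    (hfix : ∑ k, (M k)ᴴ * X * M k = X) : ∀ k, M k * X = X * M k := by
  set A : Fin m → Matrix (Fin d) (Fin d) ℂ := fun k => M k * X - X * M k with hA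
  have hfixH : ∑ k, (M k)ᴴ * Xᴴ * M k = Xᴴ := by
    have := congrArg conjTranspose hfix
    simpa [conjTranspose_sum, conjTranspose_mul, mul_assoc] using this
  have expand : ∀ k, (A k)ᴴ * A k
      = Xᴴ*((M k)ᴴ*(M k))*X - Xᴴ*((M k)ᴴ*X*(M k)) - ((M k)ᴴ*Xᴴ*(M k))*X
        + (M k)ᴴ*(Xᴴ*X)*(M k) := by
    intro k
    simp only [hA, conjTranspose_sub, conjTranspose_mul]
    noncomm_ring
  have t1 : ∑ k, (Xᴴ*((M k)ᴴ*(M k))*X) = Xᴴ*X := by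
    rw [← Finset.sum_mul, ← Finset.mul_sum, hTP, mul_one]
  have t2 : ∑ k, (Xᴴ*((M k)ᴴ*X*(M k))) = Xᴴ*X := by
    rw [← Finset.mul_sum, hfix]
  have t3 : ∑ k, (((M k)ᴴ*Xᴴ*(M k))*X) = Xᴴ*X := by
    rw [← Finset.sum_mul, hfixH]
  have t4 : ∑ k, ((M k)ᴴ*(Xᴴ*X)*(M k)).trace = (Xᴴ*X).trace := by
    have : ∀ k, ((M k)ᴴ*(Xᴴ*X)*(M k)).trace = ((Xᴴ*X)*((M k)*(M k)ᴴ)).trace := by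
      intro k
      rw [trace_mul_comm, ← mul_assoc, trace_mul_comm]
    simp only [this]
    rw [← trace_sum, ← Finset.mul_sum, hU, mul_one]
  have hsum : ∑ k, ((A k)ᴴ * (A k)).trace = 0 := by
    simp only [expand, trace_sub, trace_add, Finset.sum_sub_distrib, Finset.sum_add_distrib,
      ← trace_sum, t1, t2, t3]
    rw [trace_sum, t4]
    ring
  intro k
  have h0 : M k * X - X * M k = 0 := eq_zero_of_sum_trace' A hsum k
  linear_combination (norm := noncomm_ring) h0

/-- For a unital CPTP map `E` with Kraus operators `M k`, the fixed points of `E`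
coincide with those of the dual map `E†(X) = ∑ k, (M k)ᴴ X (M k)`, and both coincide with
the commutant of the Kraus operators; in particular the fixed-point set is closed under
adjoints and matrix products. -/
theorem fix_unital_cptp_eq_commutant {d m : ℕ}
    (E : Matrix (Fin d) (Fin d) ℂ → Matrix (Fin d) (Fin d) ℂ)
    (M : Fin m → Matrix (Fin d) (Fin d) ℂ)
    (hKraus : ∀ X, E X = ∑ k, M k * X * (M k)ᴴ)
    (hTP : ∑ k, (M k)ᴴ * M k = 1)
    (hUnital : E 1 = 1) :
    (∀ X, E X = X ↔ ∀ k, X * M k = M k * X ∧ X * (M k)ᴴ = (M k)ᴴ * X) ∧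
    (∀ X, E X = X ↔ (∑ k, (M k)ᴴ * X * M k) = X) ∧
    (∀ X, E X = X → E Xᴴ = Xᴴ) ∧
    (∀ X Y, E X = X → E Y = Y → E (X * Y) = X * Y) := by
  have hU : ∑ k, M k * (M k)ᴴ = 1 := by
    have := hUnital
    rw [hKraus] at this
    simpa using this
  -- key applied to the adjoint Kraus family
  have keyE : ∀ X, E X = X → ∀ k, (M k)ᴴ * X = X * (M k)ᴴ := by
    intro X hX
    have hfix : ∑ k, ((fun k => (M k)ᴴ) k)ᴴ * X * ((fun k => (M k)ᴴ) k) = X := by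
      simp only [conjTranspose_conjTranspose]
      rw [← hKraus]; exact hX
    exact key_commute (fun k => (M k)ᴴ)
      (by simpa using hU) (by simpa using hTP) X hfix
  -- E commutes with conjTranspose on fixed points
  have hEct : ∀ X, E Xᴴ = (E X)ᴴ := by
    intro X
    rw [hKraus, hKraus, conjTranspose_sum]
    congr 1; funext k
    simp [conjTranspose_mul, mul_assoc]
  have hAdj : ∀ X, E X = X → E Xᴴ = Xᴴ := by
    intro X hX; rw [hEct, hX]
  -- fixed points commute with every M k
  have hComm : ∀ X, E X = X → ∀ k, X * M k = M k * X ∧ X * (M k)ᴴ = (M k)ᴴ * X := by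
    intro X hX k
    constructor
    · have := keyE Xᴴ (hAdj X hX) k
      have := congrArg conjTranspose this
      simpa [conjTranspose_mul] using this
    · exact (keyE X hX k).symm
  -- commutant implies fixed
  have hCommFix : ∀ X, (∀ k, X * M k = M k * X ∧ X * (M k)ᴴ = (M k)ᴴ * X) → E X = X := by
    intro X h
    rw [hKraus]
    calc ∑ k, M k * X * (M k)ᴴ = ∑ k, (M k * (M k)ᴴ) * X := by
          congr 1; funext k
          rw [mul_assoc, (h k).2, ← mul_assoc]
      _ = X := by rw [← Finset.sum_mul, hU, one_mul]
  refine ⟨fun X => ⟨hComm X, hCommFix X⟩, fun X => ⟨?_, ?_⟩, hAdj, ?_⟩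
  · intro hX
    calc ∑ k, (M k)ᴴ * X * M k = ∑ k, ((M k)ᴴ * M k) * X := by
          congr 1; funext k
          rw [mul_assoc, (hComm X hX k).1, ← mul_assoc]
      _ = X := by rw [← Finset.sum_mul, hTP, one_mul]
  · intro hX
    apply hCommFix
    intro k
    have h1 : M k * X = X * M k := key_commute M hTP hU X hX k
    have hXH : ∑ k, (M k)ᴴ * Xᴴ * M k = Xᴴ := by
      have := congrArg conjTranspose hX
      simpa [conjTranspose_sum, conjTranspose_mul, mul_assoc] using this
    have h2 : M k * Xᴴ = Xᴴ * M k := key_commute M hTP hU Xᴴ hXH k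
    have h2' := congrArg conjTranspose h2
    simp only [conjTranspose_mul, conjTranspose_conjTranspose] at h2'
    exact ⟨h1.symm, h2'⟩
  · intro X Y hX hY
    apply hCommFix
    intro k
    obtain ⟨hx1, hx2⟩ := hComm X hX k
    obtain ⟨hy1, hy2⟩ := hComm Y hY k
    constructor
    · rw [mul_assoc, hy1, ← mul_assoc, hx1, mul_assoc]
    · rw [mul_assoc, hy2, ← mul_assoc, hx2, mul_assoc]
end

section
/- Let E be a CPTP map on the d×d complex matrices which admits a positive-definite fixed point ρ (a positive-definite density matrix with E(ρ) = ρ). Then fix(E) = ρ^{1/2} · fix(E†) · ρ^{1/2}: a matrix X satisfies E(X) = X if and only if X = ρ^{1/2} Y ρ^{1/2} for some matrix Y with E†(Y) = Y, where ρ^{1/2} is the positive-definite square root of ρ. -/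
/-!
Write `E†(Y) = ∑ₖ Mₖᴴ Y Mₖ`. Expanding `∑ₖ ⁅Y, Mₖ⁆ᴴ ⁅Y, Mₖ⁆` and pairing it with the faithful
invariant state `ρ` (a Kadison–Schwarz argument) shows that `Yρ` is fixed by `E` iff `E†(Y) = Y`
iff `Y` commutes with every `Mₖ`; taking adjoints, the same holds for `ρY`. Hence `fix(E†)` is
invariant under `Y ↦ ρ Y ρ⁻¹`. In an eigenbasis of `ρ` this map multiplies the `(i, j)` entry by
`λᵢ / λⱼ`, while `Y ↦ ρ^{1/2} Y ρ^{-1/2}` multiplies it by `√(λᵢ / λⱼ)`; so the latter is a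
polynomial in the former (Lagrange interpolation) and `fix(E†)` is invariant under it as well.
Finally `X ∈ fix(E)` iff `ρ⁻¹ X ∈ fix(E†)`, and `X = ρ^{1/2} (ρ^{1/2} ρ⁻¹ X ρ^{-1/2}) ρ^{1/2}`.
-/

open Matrix
open scoped ComplexOrder

/-- The square root of a positive semidefinite matrix, as `Matrix.PosSemidef.sqrt` was defined
in the older Mathlib (removed since). -/
noncomputable def Matrix.PosSemidef.sqrt {n 𝕜 : Type*} [Fintype n] [DecidableEq n] [RCLike 𝕜]
    {A : Matrix n n 𝕜} (hA : A.PosSemidef) : Matrix n n 𝕜 :=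
  (hA.1.eigenvectorUnitary : Matrix n n 𝕜) * diagonal ((↑) ∘ Real.sqrt ∘ hA.1.eigenvalues) *
    (star hA.1.eigenvectorUnitary : Matrix n n 𝕜)

namespace Matrix

open Polynomial LinearMap Unitary

section Diagonal

variable {n K : Type*} [Fintype n] [DecidableEq n] [Field K]

theorem aeval_mulLeftRight_diagonal_apply (f g : n → K) (p : K[X]) (W : Matrix n n K) (i j : n) :
    aeval (mulLeftRight K (diagonal f, diagonal g)) p W i j = p.eval (f i * g j) * W i j := by
  induction p using Polynomial.induction_on generalizing W with
  | C a => simp [Module.algebraMap_end_apply]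
  | add p q hp hq => simp [hp, hq, add_mul]
  | monomial k a ih =>
    rw [pow_succ, ← mul_assoc, map_mul, Module.End.mul_apply, ih, aeval_X]
    simp only [mulLeftRight_apply, mul_diagonal, diagonal_mul, eval_mul, eval_C, eval_pow, eval_X]
    ring

theorem exists_aeval_mulLeftRight_diagonal (f g f' g' : n → K) (φ : K → K)
    (h : ∀ i j, f' i * g' j = φ (f i * g j)) :
    ∃ p : K[X], aeval (mulLeftRight K (diagonal f, diagonal g)) p =
      mulLeftRight K (diagonal f', diagonal g') := by
  classical
  let nodes : Finset K := Finset.univ.image fun ij : n × n => f ij.1 * g ij.2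
  refine ⟨Lagrange.interpolate nodes _root_.id φ, LinearMap.ext fun W => ext fun i j => ?_⟩
  have hnode : f i * g j ∈ nodes := Finset.mem_image.2 ⟨(i, j), Finset.mem_univ _, rfl⟩
  rw [aeval_mulLeftRight_diagonal_apply, ← _root_.id_eq (f i * g j),
    Lagrange.eval_interpolate_at_node φ (Set.injOn_id _) hnode]
  simp [mul_diagonal, diagonal_mul, ← h, mul_right_comm]

end Diagonal

section RCLike

variable {n 𝕜 : Type*} [Fintype n] [DecidableEq n] [RCLike 𝕜] {A : Matrix n n 𝕜}

theorem conjStarAlgAut_diagonal_inv (U : unitary (Matrix n n 𝕜)) {d : n → 𝕜}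
    (hd : ∀ i, d i ≠ 0) :
    (conjStarAlgAut 𝕜 _ U (diagonal d))⁻¹ = conjStarAlgAut 𝕜 _ U (diagonal d⁻¹) := by
  refine inv_eq_right_inv ?_
  rw [← map_mul, diagonal_mul_diagonal, ← map_one (conjStarAlgAut 𝕜 _ U), ← diagonal_one]
  congr 2
  exact funext fun i => mul_inv_cancel₀ (hd i)

namespace PosSemidef

theorem sqrt_eq (hA : A.PosSemidef) :
    hA.sqrt = conjStarAlgAut 𝕜 _ hA.1.eigenvectorUnitary
      (diagonal (RCLike.ofReal ∘ Real.sqrt ∘ hA.1.eigenvalues)) :=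
  rfl

theorem sqrt_mul_self (hA : A.PosSemidef) : hA.sqrt * hA.sqrt = A := by
  conv_rhs => rw [hA.1.spectral_theorem]
  rw [sqrt_eq, ← map_mul, diagonal_mul_diagonal]
  congr 2
  funext i
  simp [← RCLike.ofReal_mul, Real.mul_self_sqrt (hA.eigenvalues_nonneg i)]

theorem conjTranspose_sqrt (hA : A.PosSemidef) : hA.sqrtᴴ = hA.sqrt := by
  rw [sqrt_eq, ← star_eq_conjTranspose, ← map_star, star_eq_conjTranspose, diagonal_conjTranspose]
  congr 2
  funext i
  simp

end PosSemidef

namespace PosDef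

theorem isUnit_sqrt (hA : A.PosDef) : IsUnit hA.posSemidef.sqrt := by
  have h : IsUnit (hA.posSemidef.sqrt * hA.posSemidef.sqrt) := by
    rw [hA.posSemidef.sqrt_mul_self]; exact hA.isUnit
  exact isUnit_of_mul_isUnit_left h

theorem eq_zero_of_trace_mul_sum_eq_zero {ι : Type*} [Fintype ι] (hA : A.PosDef)
    (C : ι → Matrix n n 𝕜) (h : trace (A * ∑ k, (C k)ᴴ * C k) = 0) (k : ι) : C k = 0 := by
  obtain ⟨s, hss, hsH, hsU⟩ : ∃ s : Matrix n n 𝕜, s * s = A ∧ sᴴ = s ∧ IsUnit s :=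
    ⟨_, hA.posSemidef.sqrt_mul_self, hA.posSemidef.conjTranspose_sqrt, hA.isUnit_sqrt⟩
  have hterm : ∀ k, trace (A * ((C k)ᴴ * C k)) = trace ((C k * s)ᴴ * (C k * s)) := fun k => by
    rw [conjTranspose_mul, hsH, ← hss, Matrix.mul_assoc, trace_mul_comm]
    simp only [Matrix.mul_assoc]
  simp only [Matrix.mul_sum, trace_sum, hterm] at h
  rw [Finset.sum_eq_zero_iff_of_nonneg fun k _ =>
    (posSemidef_conjTranspose_mul_self _).trace_nonneg] at h
  rw [← hsU.mul_left_eq_zero, ← trace_conjTranspose_mul_self_eq_zero_iff]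
  exact h k (Finset.mem_univ k)

theorem exists_aeval_mulLeftRight_eq_sqrt {ρ : Matrix n n 𝕜} (hρ : ρ.PosDef) :
    ∃ p : 𝕜[X], aeval (mulLeftRight 𝕜 (ρ, ρ⁻¹)) p =
      mulLeftRight 𝕜 (hρ.posSemidef.sqrt, hρ.posSemidef.sqrt⁻¹) := by
  set U := hρ.1.eigenvectorUnitary
  set ev := hρ.1.eigenvalues
  have hev : ∀ i, 0 < ev i := hρ.eigenvalues_pos
  let e := (conjStarAlgAut 𝕜 (Matrix n n 𝕜) U).toAlgEquiv
  let f : n → 𝕜 := RCLike.ofReal ∘ ev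
  let g : n → 𝕜 := RCLike.ofReal ∘ Real.sqrt ∘ ev
  have hρe : (ρ, ρ⁻¹) = Prod.map e e (diagonal f, diagonal f⁻¹) := by
    have hρ' : ρ = e (diagonal f) := hρ.1.spectral_theorem
    refine Prod.ext hρ' ?_
    rw [hρ']
    exact conjStarAlgAut_diagonal_inv U fun i => RCLike.ofReal_ne_zero.2 (hev i).ne'
  have hse :
      (hρ.posSemidef.sqrt, hρ.posSemidef.sqrt⁻¹) = Prod.map e e (diagonal g, diagonal g⁻¹) :=
    Prod.ext rfl (conjStarAlgAut_diagonal_inv U fun i =>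
      RCLike.ofReal_ne_zero.2 (Real.sqrt_pos.2 (hev i)).ne')
  obtain ⟨p, hp⟩ := exists_aeval_mulLeftRight_diagonal f f⁻¹ g g⁻¹
    (fun z => (Real.sqrt (RCLike.re z) : 𝕜)) fun i j => by
      simp only [f, g, Function.comp_apply, Pi.inv_apply]
      rw [← RCLike.ofReal_inv, ← RCLike.ofReal_mul, ← RCLike.ofReal_inv, ← RCLike.ofReal_mul,
        RCLike.ofReal_re, Real.sqrt_mul (hev i).le, Real.sqrt_inv]
  refine ⟨p, ?_⟩
  rw [hρe, hse, ← AlgEquiv.linearEquivConj_mulLeftRight, ← AlgEquiv.linearEquivConj_mulLeftRight,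
    ← hp]
  exact aeval_algHom_apply (e.toLinearEquiv.conjAlgEquiv 𝕜) _ p

end PosDef

end RCLike

end Matrix

section Kraus

variable {ι n 𝕜 : Type*} [Fintype ι] [Fintype n] [RCLike 𝕜] (M : ι → Matrix n n 𝕜)

noncomputable def krausMap : Module.End 𝕜 (Matrix n n 𝕜) :=
  ∑ k, LinearMap.mulLeftRight 𝕜 (M k, (M k)ᴴ)

noncomputable def krausDual : Module.End 𝕜 (Matrix n n 𝕜) :=
  ∑ k, LinearMap.mulLeftRight 𝕜 ((M k)ᴴ, M k)

@[simp]
theorem krausMap_apply (X : Matrix n n 𝕜) : krausMap M X = ∑ k, M k * X * (M k)ᴴ := by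
  simp [krausMap]

@[simp]
theorem krausDual_apply (Y : Matrix n n 𝕜) : krausDual M Y = ∑ k, (M k)ᴴ * Y * M k := by
  simp [krausDual]

theorem krausMap_conjTranspose (X : Matrix n n 𝕜) : krausMap M Xᴴ = (krausMap M X)ᴴ := by
  simp [conjTranspose_sum, Matrix.mul_assoc]

theorem krausDual_conjTranspose (Y : Matrix n n 𝕜) : krausDual M Yᴴ = (krausDual M Y)ᴴ := by
  simp [conjTranspose_sum, Matrix.mul_assoc]

theorem trace_krausDual_mul (A B : Matrix n n 𝕜) :
    trace (krausDual M A * B) = trace (A * krausMap M B) := by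
  simp only [krausDual_apply, krausMap_apply, Finset.sum_mul, Matrix.mul_sum, trace_sum]
  refine Finset.sum_congr rfl fun k _ => ?_
  rw [Matrix.mul_assoc, trace_mul_comm, ← Matrix.mul_assoc, ← Matrix.mul_assoc, trace_mul_comm]
  simp only [Matrix.mul_assoc]

theorem krausMap_mul_of_commute {Y : Matrix n n 𝕜} (hY : ∀ k, Commute Y (M k))
    (X : Matrix n n 𝕜) : krausMap M (Y * X) = Y * krausMap M X := by
  simp only [krausMap_apply, Matrix.mul_sum, ← Matrix.mul_assoc, (hY _).eq]

theorem krausDual_eq_self_of_commute [DecidableEq n] (hTP : ∑ k, (M k)ᴴ * M k = 1)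
    {Y : Matrix n n 𝕜} (hY : ∀ k, Commute Y (M k)) : krausDual M Y = Y := by
  calc krausDual M Y = ∑ k, (M k)ᴴ * M k * Y := by
        simp only [krausDual_apply, Matrix.mul_assoc, (hY _).eq]
    _ = Y := by rw [← Finset.sum_mul, hTP, Matrix.one_mul]

theorem sum_conjTranspose_lie_mul_lie (Y : Matrix n n 𝕜) :
    ∑ k, ⁅Y, M k⁆ᴴ * ⁅Y, M k⁆ = krausDual M (Yᴴ * Y) - krausDual M Yᴴ * Y
      - Yᴴ * krausDual M Y + Yᴴ * (∑ k, (M k)ᴴ * M k) * Y := by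
  simp only [krausDual_apply, Ring.lie_def, conjTranspose_sub, conjTranspose_mul, Finset.sum_mul,
    Matrix.mul_sum, ← Finset.sum_sub_distrib, ← Finset.sum_add_distrib]
  refine Finset.sum_congr rfl fun k _ => ?_
  noncomm_ring

end Kraus

section FixedPoints

variable {ι n 𝕜 : Type*} [Fintype ι] [Fintype n] [DecidableEq n] [RCLike 𝕜]
  {M : ι → Matrix n n 𝕜} {ρ : Matrix n n 𝕜}
  (hTP : ∑ k, (M k)ᴴ * M k = 1) (hρ : ρ.PosDef) (hfix : krausMap M ρ = ρ)
include hTP hρ hfix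

theorem commute_of_trace_krausDual_eq {Y : Matrix n n 𝕜}
    (h₁ : trace (ρ * (krausDual M Yᴴ * Y)) = trace (ρ * (Yᴴ * Y)))
    (h₂ : trace (ρ * (Yᴴ * krausDual M Y)) = trace (ρ * (Yᴴ * Y))) (k : ι) :
    Commute Y (M k) := by
  have h₀ : trace (ρ * krausDual M (Yᴴ * Y)) = trace (ρ * (Yᴴ * Y)) := by
    rw [trace_mul_comm, trace_krausDual_mul, hfix, trace_mul_comm]
  rw [commute_iff_lie_eq]
  refine hρ.eq_zero_of_trace_mul_sum_eq_zero (fun k => ⁅Y, M k⁆) ?_ k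
  rw [sum_conjTranspose_lie_mul_lie, hTP, Matrix.mul_one, Matrix.mul_add, Matrix.mul_sub,
    Matrix.mul_sub, trace_add, trace_sub, trace_sub, h₀, h₁, h₂]
  ring

theorem commute_of_krausDual_eq_self {Y : Matrix n n 𝕜} (hY : krausDual M Y = Y) (k : ι) :
    Commute Y (M k) :=
  commute_of_trace_krausDual_eq hTP hρ hfix (by rw [krausDual_conjTranspose, hY]) (by rw [hY]) k

theorem commute_of_krausMap_mul_eq_self {Y : Matrix n n 𝕜} (hY : krausMap M (Y * ρ) = Y * ρ)
    (k : ι) : Commute Y (M k) := by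
  have hY' : krausMap M (ρ * Yᴴ) = ρ * Yᴴ := by
    have := congrArg conjTranspose hY
    rwa [← krausMap_conjTranspose, conjTranspose_mul, hρ.isHermitian.eq] at this
  refine commute_of_trace_krausDual_eq hTP hρ hfix ?_ ?_ k
  · calc trace (ρ * (krausDual M Yᴴ * Y)) = trace (krausDual M Yᴴ * (Y * ρ)) := by
          rw [trace_mul_comm, Matrix.mul_assoc]
      _ = trace (ρ * (Yᴴ * Y)) := by
          rw [trace_krausDual_mul, hY, ← Matrix.mul_assoc, trace_mul_comm]
  · calc trace (ρ * (Yᴴ * krausDual M Y)) = trace (krausDual M Y * (ρ * Yᴴ)) := by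
          rw [← Matrix.mul_assoc, trace_mul_comm]
      _ = trace (ρ * (Yᴴ * Y)) := by
          rw [trace_krausDual_mul, hY', ← Matrix.mul_assoc, trace_mul_comm, ← Matrix.mul_assoc,
            trace_mul_comm]

theorem krausMap_mul_eq_self_iff {Y : Matrix n n 𝕜} :
    krausMap M (Y * ρ) = Y * ρ ↔ krausDual M Y = Y :=
  ⟨fun h => krausDual_eq_self_of_commute M hTP (commute_of_krausMap_mul_eq_self hTP hρ hfix h),
    fun h => by rw [krausMap_mul_of_commute M (commute_of_krausDual_eq_self hTP hρ hfix h), hfix]⟩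

theorem krausMap_mul_eq_self_iff' {Y : Matrix n n 𝕜} :
    krausMap M (ρ * Y) = ρ * Y ↔ krausDual M Y = Y := by
  rw [← conjTranspose_inj, ← krausMap_conjTranspose, conjTranspose_mul, hρ.isHermitian.eq,
    krausMap_mul_eq_self_iff hTP hρ hfix, krausDual_conjTranspose, conjTranspose_inj]

theorem krausDual_conj_eq_self {Y : Matrix n n 𝕜} (hY : krausDual M Y = Y) :
    krausDual M (ρ * Y * ρ⁻¹) = ρ * Y * ρ⁻¹ := by
  rw [← krausMap_mul_eq_self_iff hTP hρ hfix,
    nonsing_inv_mul_cancel_right _ _ ((isUnit_iff_isUnit_det ρ).mp hρ.isUnit)]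
  exact (krausMap_mul_eq_self_iff' hTP hρ hfix).2 hY

theorem krausDual_sqrt_conj_eq_self {Y : Matrix n n 𝕜} (hY : krausDual M Y = Y) :
    krausDual M (hρ.posSemidef.sqrt * Y * hρ.posSemidef.sqrt⁻¹) =
      hρ.posSemidef.sqrt * Y * hρ.posSemidef.sqrt⁻¹ := by
  obtain ⟨p, hp⟩ := hρ.exists_aeval_mulLeftRight_eq_sqrt
  let F := (krausDual M).eqLocus LinearMap.id
  have hF : F ≤ F.comap (LinearMap.mulLeftRight 𝕜 (ρ, ρ⁻¹)) :=
    fun _ hZ => krausDual_conj_eq_self hTP hρ hfix hZ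
  have h := Polynomial.aeval_apply_smul_mem_of_le_comap (show Y ∈ F from hY) p _ hF
  rwa [hp] at h

end FixedPoints

theorem fix_eq_sqrt_fixDual_sqrt_general {d m : ℕ}
    (E : Matrix (Fin d) (Fin d) ℂ → Matrix (Fin d) (Fin d) ℂ)
    (M : Fin m → Matrix (Fin d) (Fin d) ℂ)
    (hKraus : ∀ X, E X = ∑ k, M k * X * (M k)ᴴ)
    (hTP : ∑ k, (M k)ᴴ * M k = 1)
    (ρ : Matrix (Fin d) (Fin d) ℂ) (hρ : ρ.PosDef)
    (hfix : E ρ = ρ) :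
    ∀ X, E X = X ↔
      ∃ Y, (∑ k, (M k)ᴴ * Y * M k) = Y ∧
        X = hρ.posSemidef.sqrt * Y * hρ.posSemidef.sqrt := by
  have hfix' : krausMap M ρ = ρ := by rw [krausMap_apply, ← hKraus, hfix]
  set s := hρ.posSemidef.sqrt
  have hs : s * s = ρ := hρ.posSemidef.sqrt_mul_self
  have hsU : IsUnit s.det := (isUnit_iff_isUnit_det s).mp hρ.isUnit_sqrt
  have hρU : IsUnit ρ.det := (isUnit_iff_isUnit_det ρ).mp hρ.isUnit
  intro X
  rw [hKraus, ← krausMap_apply]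
  simp only [← krausDual_apply]
  constructor
  · intro hX
    have hY : krausDual M (ρ⁻¹ * X) = ρ⁻¹ * X := by
      rw [← krausMap_mul_eq_self_iff' hTP hρ hfix', mul_nonsing_inv_cancel_left _ _ hρU]
      exact hX
    refine ⟨s * (ρ⁻¹ * X) * s⁻¹, krausDual_sqrt_conj_eq_self hTP hρ hfix' hY, ?_⟩
    calc X = (s * s) * ρ⁻¹ * X * (s⁻¹ * s) := by
          rw [hs, nonsing_inv_mul _ hsU, mul_nonsing_inv _ hρU, Matrix.one_mul, Matrix.mul_one]
      _ = s * (s * (ρ⁻¹ * X) * s⁻¹) * s := by simp only [Matrix.mul_assoc]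
  · rintro ⟨Y, hY, rfl⟩
    have h : krausMap M (s * Y * s⁻¹ * ρ) = s * Y * s⁻¹ * ρ :=
      (krausMap_mul_eq_self_iff hTP hρ hfix').2 (krausDual_sqrt_conj_eq_self hTP hρ hfix' hY)
    rwa [← hs, ← Matrix.mul_assoc, nonsing_inv_mul_cancel_right _ _ hsU] at h

/-- For a CPTP map `E` (with Kraus operators `M k`) admitting a positive-definite fixed
density matrix `ρ`, the fixed-point set of `E` is `ρ^{1/2} · fix(E†) · ρ^{1/2}`, where
`E†(X) = ∑ k, (M k)ᴴ X (M k)` is the Hilbert–Schmidt dual of `E`. -/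
theorem fix_eq_sqrt_fixDual_sqrt {d m : ℕ}
    (E : Matrix (Fin d) (Fin d) ℂ → Matrix (Fin d) (Fin d) ℂ)
    (M : Fin m → Matrix (Fin d) (Fin d) ℂ)
    (hKraus : ∀ X, E X = ∑ k, M k * X * (M k)ᴴ)
    (hTP : ∑ k, (M k)ᴴ * M k = 1)
    (ρ : Matrix (Fin d) (Fin d) ℂ) (hρ : ρ.PosDef) (hρtr : ρ.trace = 1)
    (hfix : E ρ = ρ) :
    ∀ X, E X = X ↔
      ∃ Y, (∑ k, (M k)ᴴ * Y * M k) = Y ∧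
        X = hρ.posSemidef.sqrt * Y * hρ.posSemidef.sqrt :=
  fix_eq_sqrt_fixDual_sqrt_general E M hKraus hTP ρ hρ hfix
end

section
/- Let E be a CPTP map on the d×d complex matrices with Kraus operators {M_k}, and let ρ be a positive semidefinite matrix with E(ρ) = ρ. Then every Kraus operator leaves the support of ρ invariant: for every k and every vector v in the range of ρ, the vector M_k v also lies in the range of ρ. -/
/-!
If `ρ x = 0`, the fixed-point equation gives `0 = x* ρ x = ∑ⱼ (Mⱼ* x)* ρ (Mⱼ* x)`, a sum of
nonnegative terms, so `ρ Mₖ* x = 0`: the kernel of `ρ` is invariant under every `Mₖ*`.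
Since `ρ` is Hermitian, its range is the orthogonal complement of its kernel, and passing to
orthogonal complements turns this into invariance of the range of `ρ` under every `Mₖ`.
-/

open Matrix
open scoped ComplexOrder

namespace Matrix

variable {m n 𝕜 : Type*} [RCLike 𝕜] [Fintype m] [Fintype n]

theorem star_dotProduct_mulVec (A : Matrix m n 𝕜) (x : m → 𝕜) (v : n → 𝕜) :
    star x ⬝ᵥ A *ᵥ v = star (Aᴴ *ᵥ x) ⬝ᵥ v := by
  rw [star_mulVec, conjTranspose_conjTranspose, dotProduct_mulVec]

theorem mem_range_mulVecLin_iff (A : Matrix m n 𝕜) (v : m → 𝕜) :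
    v ∈ LinearMap.range A.mulVecLin ↔ ∀ x, Aᴴ *ᵥ x = 0 → star x ⬝ᵥ v = 0 := by
  classical
  constructor
  · rintro ⟨w, rfl⟩ x hx
    rw [mulVecLin_apply, star_dotProduct_mulVec, hx, star_zero, zero_dotProduct]
  · intro hv
    have hrange := LinearMap.orthogonal_ker (toEuclideanLin Aᴴ)
    rw [← toEuclideanLin_conjTranspose_eq_adjoint, conjTranspose_conjTranspose] at hrange
    have hmem : WithLp.toLp 2 v ∈ LinearMap.range (toEuclideanLin A) := by
      rw [← hrange, Submodule.mem_orthogonal]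
      intro u hu
      rw [EuclideanSpace.inner_eq_star_dotProduct, dotProduct_comm]
      exact hv _ (congrArg WithLp.ofLp hu)
    obtain ⟨w, hw⟩ := hmem
    exact ⟨w, congrArg WithLp.ofLp hw⟩

theorem PosSemidef.mulVec_conjTranspose_mulVec_eq_zero {ι : Type*} [Fintype ι]
    {ρ : Matrix n n 𝕜} (hρ : ρ.PosSemidef) {M : ι → Matrix n n 𝕜}
    (hfix : ∑ j, M j * ρ * (M j)ᴴ = ρ) {x : n → 𝕜} (hx : ρ *ᵥ x = 0) (k : ι) :
    ρ *ᵥ ((M k)ᴴ *ᵥ x) = 0 := by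
  have hform (j : ι) : star x ⬝ᵥ (M j * ρ * (M j)ᴴ) *ᵥ x =
      star ((M j)ᴴ *ᵥ x) ⬝ᵥ ρ *ᵥ ((M j)ᴴ *ᵥ x) := by
    rw [← mulVec_mulVec, ← mulVec_mulVec, star_dotProduct_mulVec]
  have hsum : ∑ j, star ((M j)ᴴ *ᵥ x) ⬝ᵥ ρ *ᵥ ((M j)ᴴ *ᵥ x) = 0 := by
    simp_rw [← hform, ← dotProduct_sum, ← sum_mulVec, hfix, hx, dotProduct_zero]
  rw [← hρ.dotProduct_mulVec_zero_iff]
  exact (Finset.sum_eq_zero_iff_of_nonneg fun j _ => hρ.dotProduct_mulVec_nonneg _).mp hsum k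
    (Finset.mem_univ k)

end Matrix

theorem kraus_ops_preserve_support_general {d m : ℕ}
    (E : Matrix (Fin d) (Fin d) ℂ → Matrix (Fin d) (Fin d) ℂ)
    (M : Fin m → Matrix (Fin d) (Fin d) ℂ)
    (hKraus : ∀ X, E X = ∑ k, M k * X * (M k)ᴴ)
    (ρ : Matrix (Fin d) (Fin d) ℂ) (hρ : ρ.PosSemidef) (hfix : E ρ = ρ) :
    ∀ k, ∀ v ∈ LinearMap.range ρ.mulVecLin,
      (M k).mulVec v ∈ LinearMap.range ρ.mulVecLin := by
  intro k v hv
  rw [mem_range_mulVecLin_iff, hρ.1] at hv ⊢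
  intro x hx
  have hsum : ∑ j, M j * ρ * (M j)ᴴ = ρ := (hKraus ρ).symm.trans hfix
  rw [star_dotProduct_mulVec]
  exact hv _ (hρ.mulVec_conjTranspose_mulVec_eq_zero hsum hx k)

/-- If `ρ` is a positive semidefinite fixed point of a CPTP map with Kraus operators
`M k`, then every Kraus operator leaves the support (range) of `ρ` invariant. -/
theorem kraus_ops_preserve_support {d m : ℕ}
    (E : Matrix (Fin d) (Fin d) ℂ → Matrix (Fin d) (Fin d) ℂ)
    (M : Fin m → Matrix (Fin d) (Fin d) ℂ)
    (hKraus : ∀ X, E X = ∑ k, M k * X * (M k)ᴴ)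
    (hTP : ∑ k, (M k)ᴴ * M k = 1)
    (ρ : Matrix (Fin d) (Fin d) ℂ) (hρ : ρ.PosSemidef) (hfix : E ρ = ρ) :
    ∀ k, ∀ v ∈ LinearMap.range ρ.mulVecLin,
      (M k).mulVec v ∈ LinearMap.range ρ.mulVecLin :=
  kraus_ops_preserve_support_general E M hKraus ρ hρ hfix
end

section
/- Let E be a CPTP map on the d×d complex matrices. Then for every matrix X the Cesàro means (1/T) Σ_{i=0}^{T−1} E^i(X) converge as T → ∞; the limit defines a linear map E_∞ which is CPTP and satisfies E_∞ ∘ E = E ∘ E_∞ = E_∞ ∘ E_∞ = E_∞, and the fixed-point set of E_∞ equals its range and equals fix(E). In particular, E_∞ is a CPTP projection onto fix(E). -/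
open Matrix Filter
open scoped ComplexOrder

/-- A map on `d × d` complex matrices is CPTP if it admits a Kraus (operator-sum)
representation `E(X) = ∑ k, M k * X * (M k)ᴴ` with `∑ k, (M k)ᴴ * M k = 1`. -/
def IsCPTP {d : ℕ} (E : Matrix (Fin d) (Fin d) ℂ → Matrix (Fin d) (Fin d) ℂ) : Prop :=
  ∃ (m : ℕ) (M : Fin m → Matrix (Fin d) (Fin d) ℂ),
    (∀ X, E X = ∑ k, M k * X * (M k)ᴴ) ∧ (∑ k, (M k)ᴴ * M k = 1)

/-!
A CPTP map `E` is linear and sends a positive semidefinite matrix to a positive semidefinite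
matrix of the same trace, whose entries are bounded by that trace. Positive semidefinite
matrices span all matrices, so every orbit `Eⁿ X` is bounded.

For a linear map `L` with bounded orbits, the Cesàro means of a vector `y - L y` are
`(y - Lⁿ y) / n → 0`, while those of a fixed vector are constant; hence
`ker (L - 1) ∩ range (L - 1) = 0`, in finite dimension the space is
`ker (L - 1) ⊕ range (L - 1)`, and the Cesàro means converge to the projection onto the
fixed space along `range (L - 1)`.

The limit is CPTP: its Choi matrix is a limit of convex combinations of the positive semidefinite
Choi matrices of the `Eⁿ`, it preserves the trace, and a decomposition `∑ₖ vₖ vₖᴴ` of a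
positive semidefinite Choi matrix reads off Kraus operators.
-/

open Topology Bornology

theorem birkhoffAverage_eq_smul_sum {R α M : Type*} [DivisionSemiring R] [AddCommMonoid M]
    [Module R M] (f : α → α) (g : α → M) (n : ℕ) :
    birkhoffAverage R f g n = (n : R)⁻¹ • ∑ k ∈ Finset.range n, g ∘ f^[k] := by
  funext x
  simp [birkhoffAverage, birkhoffSum, Finset.sum_apply]

theorem Module.End.birkhoffAverage_eq_smul_sum_pow {R M : Type*} [Semifield R] [AddCommMonoid M]
    [Module R M] (L : Module.End R M) (n : ℕ) :
    birkhoffAverage R L id n = ⇑((n : R)⁻¹ • ∑ k ∈ Finset.range n, L ^ k) := by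
  ext x
  simp [birkhoffAverage_eq_smul_sum, Module.End.coe_pow]

namespace Module.End

section FixedProjection

variable {R M : Type*} [Ring R] [AddCommGroup M] [Module R M] {L : Module.End R M}

lemma mem_ker_sub_one_iff {x : M} : x ∈ LinearMap.ker (L - 1) ↔ L x = x := by
  simp [sub_eq_zero]

variable (h : IsCompl (LinearMap.ker (L - 1)) (LinearMap.range (L - 1)))

noncomputable def fixedProjection : M →ₗ[R] M :=
  (LinearMap.ker (L - 1)).projection (LinearMap.range (L - 1)) h

lemma fixedProjection_apply_map (x : M) : fixedProjection h (L x) = fixedProjection h x := by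
  rw [← sub_eq_zero, ← map_sub]
  exact Submodule.projection_apply_of_mem_right h ⟨x, by simp⟩

lemma map_fixedProjection_apply (x : M) : L (fixedProjection h x) = fixedProjection h x :=
  mem_ker_sub_one_iff.1 (Submodule.projection_apply_mem h x)

lemma fixedProjection_apply_eq_self_iff {x : M} : fixedProjection h x = x ↔ L x = x :=
  ⟨fun hx => hx ▸ map_fixedProjection_apply h x,
    fun hx => Submodule.projection_apply_of_mem_left h (mem_ker_sub_one_iff.2 hx)⟩

lemma mem_range_fixedProjection_iff {x : M} :
    x ∈ LinearMap.range (fixedProjection h) ↔ L x = x := by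
  rw [fixedProjection, Submodule.range_projection, mem_ker_sub_one_iff]

end FixedProjection

section BoundedOrbits

variable {𝕜 V : Type*} [RCLike 𝕜] [NormedAddCommGroup V] [NormedSpace 𝕜 V]
  {L : Module.End 𝕜 V}

lemma tendsto_birkhoffAverage_of_mem_range_sub_one
    (hL : ∀ x, IsBounded (Set.range fun n => L^[n] x)) {x : V}
    (hx : x ∈ LinearMap.range (L - 1)) :
    Tendsto (birkhoffAverage 𝕜 L id · x) atTop (𝓝 0) := by
  obtain ⟨y, rfl⟩ := hx
  simpa [birkhoffAverage_eq_smul_sum_pow L, smul_sub] using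
    tendsto_birkhoffAverage_apply_sub_birkhoffAverage 𝕜 (g := id) (hL y)

lemma disjoint_ker_sub_one_range_sub_one (hL : ∀ x, IsBounded (Set.range fun n => L^[n] x)) :
    Disjoint (LinearMap.ker (L - 1)) (LinearMap.range (L - 1)) :=
  Submodule.disjoint_def.2 fun _ hker hrange =>
    tendsto_nhds_unique
      (Function.IsFixedPt.tendsto_birkhoffAverage 𝕜 (mem_ker_sub_one_iff.1 hker) id)
      (tendsto_birkhoffAverage_of_mem_range_sub_one hL hrange)

lemma isCompl_ker_sub_one_range_sub_one [FiniteDimensional 𝕜 V]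
    (hL : ∀ x, IsBounded (Set.range fun n => L^[n] x)) :
    IsCompl (LinearMap.ker (L - 1)) (LinearMap.range (L - 1)) :=
  (Submodule.isCompl_iff_disjoint _ _ (by rw [add_comm, LinearMap.finrank_range_add_finrank_ker])).2
    (disjoint_ker_sub_one_range_sub_one hL)

lemma tendsto_birkhoffAverage_fixedProjection [FiniteDimensional 𝕜 V]
    (hL : ∀ x, IsBounded (Set.range fun n => L^[n] x)) (x : V) :
    Tendsto (birkhoffAverage 𝕜 L id · x) atTop
      (𝓝 (fixedProjection (isCompl_ker_sub_one_range_sub_one hL) x)) := by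
  set h := isCompl_ker_sub_one_range_sub_one hL
  have hfix := Function.IsFixedPt.tendsto_birkhoffAverage 𝕜
    (mem_ker_sub_one_iff.1 (Submodule.projection_apply_mem h x)) id
  have hrest := tendsto_birkhoffAverage_of_mem_range_sub_one hL (Submodule.sub_projection_mem h x)
  have hsplit : ∀ n, birkhoffAverage 𝕜 L id n x = birkhoffAverage 𝕜 L id n
      (fixedProjection h x) + birkhoffAverage 𝕜 L id n (x - fixedProjection h x) := by
    intro n
    rw [birkhoffAverage_eq_smul_sum_pow L, ← map_add, add_sub_cancel]
  have := (hfix.add hrest).congr fun n => (hsplit n).symm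
  rwa [add_zero] at this

end BoundedOrbits

end Module.End

namespace Matrix

section PosSemidef

variable {n : Type*} [Fintype n]

lemma PosSemidef.re_apply_le_re_trace {A : Matrix n n ℂ} (hA : A.PosSemidef) (i : n) :
    (A i i).re ≤ A.trace.re := by
  rw [trace, Complex.re_sum]
  exact Finset.single_le_sum (f := fun j => (A j j).re)
    (fun j _ => (Complex.nonneg_iff.1 hA.diag_nonneg).1) (Finset.mem_univ i)

lemma PosSemidef.norm_apply_le_re_trace {A : Matrix n n ℂ} (hA : A.PosSemidef) (i j : n) :
    ‖A i j‖ ≤ A.trace.re := by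
  obtain ⟨m, v, hv⟩ := posSemidef_iff_eq_sum_vecMulVec.1 hA
  have hentry : ∀ a b, A a b = ∑ k, v k a * star (v k b) := by
    simp [hv, Matrix.sum_apply, vecMulVec_apply]
  have hdiag : ∀ a, (A a a).re = ∑ k, ‖v k a‖ ^ 2 := by
    simp [hentry, Complex.re_sum, RCLike.mul_conj, ← Complex.ofReal_pow]
  calc ‖A i j‖ ≤ ∑ k, ‖v k i‖ * ‖v k j‖ := by
        simpa [hentry] using norm_sum_le Finset.univ fun k => v k i * star (v k j)
    _ ≤ ∑ k, (‖v k i‖ ^ 2 + ‖v k j‖ ^ 2) / 2 :=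
        Finset.sum_le_sum fun k _ => by nlinarith [sq_nonneg (‖v k i‖ - ‖v k j‖)]
    _ = ((A i i).re + (A j j).re) / 2 := by
        rw [hdiag, hdiag, ← Finset.sum_add_distrib, Finset.sum_div]
    _ ≤ A.trace.re := by
        linarith [hA.re_apply_le_re_trace i, hA.re_apply_le_re_trace j]

lemma isClosed_setOf_posSemidef : IsClosed {A : Matrix n n ℂ | A.PosSemidef} := by
  simp only [posSemidef_iff_dotProduct_mulVec, Set.ofPred_and, Set.ofPred_forall]
  exact (isClosed_eq continuous_id.matrix_conjTranspose continuous_id).inter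
    (isClosed_iInter fun x => isClosed_le continuous_const (by fun_prop))

open scoped MatrixOrder Matrix.Norms.L2Operator in
lemma span_posSemidef [DecidableEq n] :
    Submodule.span ℂ {A : Matrix n n ℂ | A.PosSemidef} = ⊤ := by
  simpa only [nonneg_iff_posSemidef] using CStarAlgebra.span_nonneg (A := Matrix n n ℂ)

end PosSemidef

section Kraus

variable {n ι : Type*} [Fintype n] [Fintype ι]

lemma isLinearMap_kraus (K : ι → Matrix n n ℂ) :
    IsLinearMap ℂ fun X => ∑ k, K k * X * (K k)ᴴ :=
  ⟨fun X Y => by simp [Matrix.mul_add, Matrix.add_mul, Finset.sum_add_distrib],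
    fun c X => by simp [Finset.smul_sum]⟩

lemma trace_kraus (K : ι → Matrix n n ℂ) (X : Matrix n n ℂ) :
    (∑ k, K k * X * (K k)ᴴ).trace = ((∑ k, (K k)ᴴ * K k) * X).trace := by
  simp only [trace_sum, Finset.sum_mul]
  exact Finset.sum_congr rfl fun k _ => trace_mul_cycle _ _ _

end Kraus

section Choi

variable {n : Type*} [DecidableEq n]

def choiMatrix : (Matrix n n ℂ → Matrix n n ℂ) →ₗ[ℂ] Matrix (n × n) (n × n) ℂ where
  toFun Φ := of fun p q => Φ (single p.2 q.2 1) p.1 q.1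
  map_add' _ _ := rfl
  map_smul' _ _ := rfl

lemma choiMatrix_apply (Φ : Matrix n n ℂ → Matrix n n ℂ) (p q : n × n) :
    choiMatrix Φ p q = Φ (single p.2 q.2 1) p.1 q.1 := rfl

lemma tendsto_choiMatrix {ι : Type*} {l : Filter ι}
    {Φ : ι → Matrix n n ℂ → Matrix n n ℂ} {Ψ : Matrix n n ℂ → Matrix n n ℂ}
    (h : ∀ X, Tendsto (fun t => Φ t X) l (𝓝 (Ψ X))) :
    Tendsto (fun t => choiMatrix (Φ t)) l (𝓝 (choiMatrix Ψ)) :=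
  tendsto_pi_nhds.2 fun p => tendsto_pi_nhds.2 fun q =>
    ((continuous_id.matrix_elem p.1 q.1).tendsto _).comp (h (single p.2 q.2 1))

variable [Fintype n]

lemma ext_linearMap_of_choiMatrix_eq {Φ Ψ : Matrix n n ℂ →ₗ[ℂ] Matrix n n ℂ}
    (h : choiMatrix Φ = choiMatrix Ψ) : Φ = Ψ :=
  ext_linearMap ℂ fun i j => LinearMap.ext_ring <| ext fun a b => by
    simpa [choiMatrix_apply] using congrFun (congrFun h (a, i)) (b, j)

lemma choiMatrix_kraus {ι : Type*} [Fintype ι] (K : ι → Matrix n n ℂ) :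
    choiMatrix (fun X => ∑ k, K k * X * (K k)ᴴ) =
      ∑ k, vecMulVec (fun p => K k p.1 p.2) (star fun p => K k p.1 p.2) := by
  ext p q
  simp [choiMatrix_apply, Matrix.sum_apply, vecMulVec_apply, mul_apply, single, ite_and]

end Choi

end Matrix

section CPTP

variable {d : ℕ} {E F : Matrix (Fin d) (Fin d) ℂ → Matrix (Fin d) (Fin d) ℂ}

lemma isCPTP_of_kraus {ι : Type*} [Fintype ι] (K : ι → Matrix (Fin d) (Fin d) ℂ)
    (hE : ∀ X, E X = ∑ k, K k * X * (K k)ᴴ) (hK : ∑ k, (K k)ᴴ * K k = 1) : IsCPTP E := by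
  let e := Fintype.equivFin ι
  refine ⟨Fintype.card ι, K ∘ e.symm, fun X => ?_, ?_⟩
  · rw [hE, ← e.symm.sum_comp]
    rfl
  · rw [← hK, ← e.symm.sum_comp]
    rfl

lemma isCPTP_id : IsCPTP (id : Matrix (Fin d) (Fin d) ℂ → Matrix (Fin d) (Fin d) ℂ) :=
  ⟨1, fun _ => 1, by simp, by simp⟩

lemma IsCPTP.comp (hE : IsCPTP E) (hF : IsCPTP F) : IsCPTP (E ∘ F) := by
  obtain ⟨m, M, hM, hM1⟩ := hE
  obtain ⟨l, N, hN, hN1⟩ := hF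
  refine isCPTP_of_kraus (fun p : Fin m × Fin l => M p.1 * N p.2) (fun X => ?_) ?_
  · rw [Function.comp_apply, hM, hN, Fintype.sum_prod_type]
    refine Finset.sum_congr rfl fun j _ => ?_
    rw [Finset.mul_sum, Finset.sum_mul]
    refine Finset.sum_congr rfl fun k _ => ?_
    rw [conjTranspose_mul]
    simp only [Matrix.mul_assoc]
  · calc ∑ p : Fin m × Fin l, (M p.1 * N p.2)ᴴ * (M p.1 * N p.2)
        = ∑ k, (N k)ᴴ * (∑ j, (M j)ᴴ * M j) * N k := by
          rw [Fintype.sum_prod_type_right]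
          refine Finset.sum_congr rfl fun k _ => ?_
          simp only [Finset.mul_sum, Finset.sum_mul, conjTranspose_mul, Matrix.mul_assoc]
      _ = 1 := by simp only [hM1, Matrix.mul_one, hN1]

lemma IsCPTP.iterate (hE : IsCPTP E) (n : ℕ) : IsCPTP E^[n] := by
  induction n with
  | zero => exact isCPTP_id
  | succ n ih => exact Function.iterate_succ E n ▸ ih.comp hE

lemma IsCPTP.isLinearMap (hE : IsCPTP E) : IsLinearMap ℂ E := by
  obtain ⟨m, M, hM, -⟩ := hE
  exact funext hM ▸ isLinearMap_kraus M

lemma IsCPTP.trace_apply (hE : IsCPTP E) (X : Matrix (Fin d) (Fin d) ℂ) :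
    (E X).trace = X.trace := by
  obtain ⟨m, M, hM, hM1⟩ := hE
  rw [hM, trace_kraus, hM1, Matrix.one_mul]

lemma IsCPTP.posSemidef_apply (hE : IsCPTP E) {X : Matrix (Fin d) (Fin d) ℂ}
    (hX : X.PosSemidef) : (E X).PosSemidef := by
  obtain ⟨m, M, hM, -⟩ := hE
  exact hM X ▸ posSemidef_sum _ fun k _ => hX.mul_mul_conjTranspose_same (M k)

lemma IsCPTP.choiMatrix_posSemidef (hE : IsCPTP E) : (choiMatrix E).PosSemidef := by
  obtain ⟨m, M, hM, -⟩ := hE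
  rw [funext hM, choiMatrix_kraus]
  exact posSemidef_sum _ fun k _ => posSemidef_vecMulVec_self_star _

lemma isCPTP_of_choiMatrix_posSemidef
    (Φ : Matrix (Fin d) (Fin d) ℂ →ₗ[ℂ] Matrix (Fin d) (Fin d) ℂ)
    (hΦ : (choiMatrix Φ).PosSemidef) (htr : ∀ X, (Φ X).trace = X.trace) : IsCPTP Φ := by
  obtain ⟨m, v, hv⟩ := posSemidef_iff_eq_sum_vecMulVec.1 hΦ
  let K : Fin m → Matrix (Fin d) (Fin d) ℂ := fun k => of fun a i => v k (a, i)
  have hrep : Φ = IsLinearMap.mk' _ (isLinearMap_kraus K) :=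
    ext_linearMap_of_choiMatrix_eq (hv.trans (choiMatrix_kraus K).symm)
  refine ⟨m, K, fun X => congrArg (· X) hrep, ext_iff_trace_mul_right.2 fun X => ?_⟩
  rw [← trace_kraus, Matrix.one_mul, ← htr X]
  exact congrArg trace (congrArg (· X) hrep).symm

lemma isCPTP_of_tendsto {ι : Type*} {l : Filter ι} [l.NeBot]
    {Φ : ι → Matrix (Fin d) (Fin d) ℂ → Matrix (Fin d) (Fin d) ℂ}
    {Ψ : Matrix (Fin d) (Fin d) ℂ →ₗ[ℂ] Matrix (Fin d) (Fin d) ℂ}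
    (hlim : ∀ X, Tendsto (fun t => Φ t X) l (𝓝 (Ψ X)))
    (hΦ : ∀ᶠ t in l, (choiMatrix (Φ t)).PosSemidef ∧ ∀ X, (Φ t X).trace = X.trace) :
    IsCPTP Ψ :=
  isCPTP_of_choiMatrix_posSemidef Ψ
    (isClosed_setOf_posSemidef.mem_of_tendsto (tendsto_choiMatrix hlim) (hΦ.mono fun _ h => h.1))
    fun X => tendsto_nhds_unique ((continuous_id.matrix_trace.tendsto _).comp (hlim X))
      (tendsto_const_nhds.congr' (hΦ.mono fun _ h => (h.2 X).symm))

lemma IsCPTP.choiMatrix_birkhoffAverage_posSemidef (hE : IsCPTP E) (T : ℕ) :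
    (choiMatrix (birkhoffAverage ℂ E id T)).PosSemidef := by
  rw [birkhoffAverage_eq_smul_sum, map_smul, map_sum]
  refine (posSemidef_sum _ fun k _ => (hE.iterate k).choiMatrix_posSemidef).smul ?_
  simp

lemma IsCPTP.trace_birkhoffAverage (hE : IsCPTP E) {T : ℕ} (hT : T ≠ 0)
    (X : Matrix (Fin d) (Fin d) ℂ) : (birkhoffAverage ℂ E id T X).trace = X.trace :=
  calc (birkhoffAverage ℂ E id T X).trace = birkhoffAverage ℂ E trace T X :=
        map_birkhoffAverage ℂ ℂ (traceAddMonoidHom (Fin d) ℂ) E id T X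
    _ = X.trace := by
        rw [birkhoffAverage_of_comp_eq ℂ (funext hE.trace_apply) (Nat.cast_ne_zero.2 hT)]

end CPTP

section CesaroLimit

-- Any norm would do: only the boundedness of orbits is used.
attribute [local instance] Matrix.normedAddCommGroup Matrix.normedSpace

variable {d : ℕ} {E : Matrix (Fin d) (Fin d) ℂ → Matrix (Fin d) (Fin d) ℂ}

lemma IsCPTP.isBounded_range_iterate (hE : IsCPTP E) (X : Matrix (Fin d) (Fin d) ℂ) :
    IsBounded (Set.range fun n => E^[n] X) := by
  have hX : X ∈ Submodule.span ℂ {A : Matrix (Fin d) (Fin d) ℂ | A.PosSemidef} := by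
    rw [span_posSemidef]
    exact Submodule.mem_top
  induction hX using Submodule.span_induction with
  | mem A hA =>
    refine isBounded_iff_forall_norm_le.2 ⟨A.trace.re, Set.forall_mem_range.2 fun n => ?_⟩
    have hAn := (hE.iterate n).posSemidef_apply hA
    rw [← (hE.iterate n).trace_apply A]
    exact (norm_le_iff (Complex.nonneg_iff.1 hAn.trace_nonneg).1).2 hAn.norm_apply_le_re_trace
  | zero =>
    exact isBounded_singleton.subset
      (Set.range_subset_iff.2 fun n => (hE.iterate n).isLinearMap.map_zero)
  | add X Y _ _ hX hY =>
    refine (isBounded_add hX hY).subset (Set.range_subset_iff.2 fun n => ?_)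
    rw [(hE.iterate n).isLinearMap.map_add]
    exact Set.add_mem_add ⟨n, rfl⟩ ⟨n, rfl⟩
  | smul c X _ hX =>
    refine (hX.smul₀ c).subset (Set.range_subset_iff.2 fun n => ?_)
    rw [(hE.iterate n).isLinearMap.map_smul]
    exact Set.smul_mem_smul_set ⟨n, rfl⟩

def IsCPTP.toLinearMap (hE : IsCPTP E) :
    Matrix (Fin d) (Fin d) ℂ →ₗ[ℂ] Matrix (Fin d) (Fin d) ℂ :=
  IsLinearMap.mk' E hE.isLinearMap

lemma IsCPTP.isCompl_ker_sub_one_range_sub_one (hE : IsCPTP E) :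
    IsCompl (LinearMap.ker (hE.toLinearMap - 1)) (LinearMap.range (hE.toLinearMap - 1)) :=
  Module.End.isCompl_ker_sub_one_range_sub_one hE.isBounded_range_iterate

/-- The map `E∞` of the theorem. -/
noncomputable def IsCPTP.cesaroLimit (hE : IsCPTP E) :
    Matrix (Fin d) (Fin d) ℂ →ₗ[ℂ] Matrix (Fin d) (Fin d) ℂ :=
  Module.End.fixedProjection hE.isCompl_ker_sub_one_range_sub_one

lemma IsCPTP.tendsto_birkhoffAverage_cesaroLimit (hE : IsCPTP E)
    (X : Matrix (Fin d) (Fin d) ℂ) :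
    Tendsto (birkhoffAverage ℂ E id · X) atTop (𝓝 (hE.cesaroLimit X)) :=
  Module.End.tendsto_birkhoffAverage_fixedProjection hE.isBounded_range_iterate X

lemma IsCPTP.isCPTP_cesaroLimit (hE : IsCPTP E) : IsCPTP hE.cesaroLimit :=
  isCPTP_of_tendsto hE.tendsto_birkhoffAverage_cesaroLimit <|
    (eventually_ne_atTop 0).mono fun _ hT =>
      ⟨hE.choiMatrix_birkhoffAverage_posSemidef _, hE.trace_birkhoffAverage hT⟩

end CesaroLimit

/-- The Cesàro means `(1/T) ∑_{i<T} E^i(X)` of a CPTP map `E` converge; the limit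
defines a CPTP map `E∞` satisfying `E∞ ∘ E = E ∘ E∞ = E∞ ∘ E∞ = E∞`, whose fixed-point
set equals its range and equals `fix(E)`: `E∞` is a CPTP projection onto `fix(E)`. -/
theorem cesaro_limit_is_CPTP_projection_onto_fix {d : ℕ}
    (E : Matrix (Fin d) (Fin d) ℂ → Matrix (Fin d) (Fin d) ℂ) (hE : IsCPTP E) :
    ∃ Einf : Matrix (Fin d) (Fin d) ℂ → Matrix (Fin d) (Fin d) ℂ,
      (∀ X, Tendsto (fun T : ℕ => (T : ℂ)⁻¹ • ∑ i ∈ Finset.range T, E^[i] X)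
        atTop (nhds (Einf X))) ∧
      IsCPTP Einf ∧
      (∀ X, Einf (E X) = Einf X) ∧
      (∀ X, E (Einf X) = Einf X) ∧
      (∀ X, Einf (Einf X) = Einf X) ∧
      (∀ X, Einf X = X ↔ E X = X) ∧
      (∀ X, (∃ Y, Einf Y = X) ↔ E X = X) := by
  have h := hE.isCompl_ker_sub_one_range_sub_one
  refine ⟨hE.cesaroLimit, hE.tendsto_birkhoffAverage_cesaroLimit, hE.isCPTP_cesaroLimit,
    Module.End.fixedProjection_apply_map h, Module.End.map_fixedProjection_apply h,
    fun X => (Module.End.fixedProjection_apply_eq_self_iff h).2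
      (Module.End.map_fixedProjection_apply h X),
    fun X => Module.End.fixedProjection_apply_eq_self_iff h,
    fun X => Module.End.mem_range_fixedProjection_iff h⟩
end

section
/- Let {E_j}_{j=1}^M be finitely many CPTP maps on the d×d complex matrices, let S be a set of density matrices, and let V be a function from density matrices to the nonnegative reals with V(ρ) = 0 if and only if ρ ∈ S. Assume: (i) V(E_j(ρ)) ≤ V(ρ) for every j and every density matrix ρ; (ii) for every ε > 0 there is a finite sequence j_1,…,j_K ∈ {1,…,M} such that V(E_{j_K}∘⋯∘E_{j_1}(ρ)) < ε for every density matrix ρ. Let (J_t)_{t≥1} be independent random variables with values in {1,…,M} such that for some ε₀ > 0, P(J_t = j) ≥ ε₀ for all t and j, and for a fixed initial density matrix ρ₀ set ρ(t) = E_{J_t}∘⋯∘E_{J_1}(ρ₀). Then for every γ > 0, the probability P(V(ρ(t)) < γ) converges to 1 as t → ∞. -/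
/-!
Since every `Eⱼ` maps density matrices to density matrices and does not increase `V`, the value
`V (ρ t)` is non-increasing along every trajectory, so the events `{V (ρ t) < γ}` increase with
`t` and it suffices that almost surely `V (ρ t) < γ` for some `t`. Take a word `js` of length
`K` that drives every density matrix below `γ`. The events "the indices on the block
`[nK, nK + K)` spell `js`" concern disjoint sets of independent indices, hence are independent,
and each has probability at least `ε₀ ^ K`. By the second Borel–Cantelli lemma one of them
occurs almost surely, and right after it `V (ρ t) < γ`.
-/

open Matrix Filter MeasureTheory ProbabilityTheory
open scoped ComplexOrder

/-- A density matrix: positive semidefinite with trace one. -/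
def IsDensity {d : ℕ} (ρ : Matrix (Fin d) (Fin d) ℂ) : Prop :=
  ρ.PosSemidef ∧ ρ.trace = 1

/-- The random trajectory `ρ(t) = E_{J_t} ∘ ⋯ ∘ E_{J_1}(ρ₀)` driven by the random
indices `J`. -/
def traj {d M : ℕ} {Ω : Type*} (Es : Fin M → (Matrix (Fin d) (Fin d) ℂ → Matrix (Fin d) (Fin d) ℂ))
    (J : ℕ → Ω → Fin M) (ρ₀ : Matrix (Fin d) (Fin d) ℂ) : ℕ → Ω → Matrix (Fin d) (Fin d) ℂ
  | 0, _ => ρ₀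
  | (t + 1), ω => Es (J t ω) (traj Es J ρ₀ t ω)

open scoped ENNReal

namespace ProbabilityTheory

variable {Ω α : Type*} [MeasurableSpace Ω] [MeasurableSpace α] [MeasurableSingletonClass α]
  {P : Measure Ω} {J : ℕ → Ω → α}

def blockEq (J : ℕ → Ω → α) {K : ℕ} (w : Fin K → α) (n : ℕ) : Set Ω :=
  {ω | ∀ k : Fin K, J (n * K + k) ω = w k}

lemma measurableSet_blockEq (hJ : ∀ t, Measurable (J t)) {K : ℕ} (w : Fin K → α) (n : ℕ) :
    MeasurableSet (blockEq J w n) := by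
  simp only [blockEq, Set.ofPred_forall]
  exact MeasurableSet.iInter fun k => hJ _ (measurableSet_singleton (w k))

lemma iIndepFun.measure_blockEq (hind : iIndepFun J P) {K : ℕ} (w : Fin K → α) (n : ℕ) :
    P (blockEq J w n) = ∏ k : Fin K, P {ω | J (n * K + k) ω = w k} := by
  rw [blockEq, Set.ofPred_forall]
  exact (hind.precomp (f := J) (g := fun k : Fin K => n * K + k)
    fun i j h => Fin.ext (by simpa using h)).meas_iInter
    fun k => ⟨{w k}, measurableSet_singleton _, rfl⟩

lemma iIndepFun.iIndepSet_blockEq (hJ : ∀ t, Measurable (J t)) (hind : iIndepFun J P)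
    {K : ℕ} (w : Fin K → α) : iIndepSet (blockEq J w) P := by
  have hinj : Function.Injective fun p : ℕ × Fin K => p.1 * K + p.2 := by
    rintro ⟨a, i⟩ ⟨b, j⟩ h
    have : NeZero K := ⟨i.pos.ne'⟩
    exact (Nat.divModEquiv K).symm.injective h
  set D : ℕ × Fin K → Set Ω := fun p => {ω | J (p.1 * K + p.2) ω = w p.2}
  have hD : ∀ F : Finset (ℕ × Fin K), P (⋂ p ∈ F, D p) = ∏ p ∈ F, P (D p) := fun F =>
    (hind.precomp hinj).meas_biInter fun p _ => ⟨{w p.2}, measurableSet_singleton _, rfl⟩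
  have hunion : ∀ F : Finset ℕ, ⋂ n ∈ F, blockEq J w n = ⋂ p ∈ F ×ˢ Finset.univ, D p := by
    intro F; ext ω
    simp only [blockEq, D, Set.mem_iInter, Set.mem_ofPred_eq, Finset.mem_product,
      Finset.mem_univ, and_true, Prod.forall]
    exact ⟨fun h n k hn => h n hn k, fun h n hn k => h n k hn⟩
  rw [iIndepSet_iff_meas_biInter (measurableSet_blockEq hJ w)]
  intro F
  rw [hunion, hD, Finset.prod_product]
  exact Finset.prod_congr rfl fun n _ => (hind.measure_blockEq w n).symm

lemma pow_le_measure_blockEq {q : ℝ≥0∞} (hind : iIndepFun J P)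
    (hlow : ∀ t a, q ≤ P {ω | J t ω = a}) {K : ℕ} (w : Fin K → α) (n : ℕ) :
    q ^ K ≤ P (blockEq J w n) := by
  rw [hind.measure_blockEq]
  calc q ^ K = ∏ _k : Fin K, q := by simp
    _ ≤ _ := Finset.prod_le_prod' fun k _ => hlow _ _

lemma iIndepFun.measure_iUnion_blockEq_eq_one (hJ : ∀ t, Measurable (J t))
    (hind : iIndepFun J P) {q : ℝ≥0∞} (hq : q ≠ 0) (hlow : ∀ t a, q ≤ P {ω | J t ω = a})
    {K : ℕ} (w : Fin K → α) : P (⋃ n, blockEq J w n) = 1 := by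
  have := hind.isProbabilityMeasure
  have htsum : ∑' n, P (blockEq J w n) = ∞ := top_le_iff.mp <|
    calc ∞ = ∑' _ : ℕ, q ^ K := (ENNReal.tsum_const_eq_top_of_ne_zero (pow_ne_zero K hq)).symm
      _ ≤ _ := ENNReal.tsum_le_tsum fun n => pow_le_measure_blockEq hind hlow w n
  refine le_antisymm prob_le_one ?_
  calc 1 = P (limsup (blockEq J w) atTop) := (measure_limsup_eq_one
        (measurableSet_blockEq hJ w) (hind.iIndepSet_blockEq hJ w) htsum).symm
    _ ≤ P (⋃ n, blockEq J w n) := measure_mono limsup_le_iSup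

end ProbabilityTheory

section Trajectory

variable {d : ℕ}

lemma IsCPTP.isDensity_apply {E : Matrix (Fin d) (Fin d) ℂ → Matrix (Fin d) (Fin d) ℂ}
    (hE : IsCPTP E) {ρ : Matrix (Fin d) (Fin d) ℂ} (hρ : IsDensity ρ) : IsDensity (E ρ) := by
  obtain ⟨m, A, hKraus, hTP⟩ := hE
  obtain ⟨hpos, htr⟩ := hρ
  rw [hKraus]
  refine ⟨Matrix.posSemidef_sum _ fun k _ => hpos.mul_mul_conjTranspose_same (A k), ?_⟩
  calc (∑ k, A k * ρ * (A k)ᴴ).trace = ((∑ k, (A k)ᴴ * A k) * ρ).trace := by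
        simp only [Matrix.trace_sum, Finset.sum_mul, Matrix.trace_mul_cycle (A _)]
    _ = 1 := by rw [hTP, one_mul, htr]

variable {M : ℕ} {Ω : Type*} {Es : Fin M → Matrix (Fin d) (Fin d) ℂ → Matrix (Fin d) (Fin d) ℂ}
  {J : ℕ → Ω → Fin M} {ρ₀ : Matrix (Fin d) (Fin d) ℂ}

lemma isDensity_traj (hEs : ∀ j, IsCPTP (Es j)) (hρ₀ : IsDensity ρ₀) (t : ℕ) (ω : Ω) :
    IsDensity (traj Es J ρ₀ t ω) := by
  induction t with
  | zero => exact hρ₀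
  | succ t ih => exact (hEs _).isDensity_apply ih

lemma antitone_traj {V : Matrix (Fin d) (Fin d) ℂ → ℝ} (hEs : ∀ j, IsCPTP (Es j))
    (hmono : ∀ j ρ, IsDensity ρ → V (Es j ρ) ≤ V ρ) (hρ₀ : IsDensity ρ₀) (ω : Ω) :
    Antitone fun t => V (traj Es J ρ₀ t ω) :=
  antitone_nat_of_succ_le fun t => hmono _ _ (isDensity_traj hEs hρ₀ t ω)

lemma traj_add (t K : ℕ) (ω : Ω) :
    traj Es J ρ₀ (t + K) ω =
      (List.ofFn fun k : Fin K => Es (J (t + k) ω)).foldl (fun σ f => f σ) (traj Es J ρ₀ t ω) := by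
  induction K with
  | zero => rfl
  | succ K ih =>
    simp only [List.ofFn_succ', List.concat_eq_append, List.foldl_append, Fin.val_castSucc,
      Fin.val_last, ← ih]
    rfl

end Trajectory

theorem randomized_lyapunov_convergence_in_probability_general {d M : ℕ}
    (Es : Fin M → (Matrix (Fin d) (Fin d) ℂ → Matrix (Fin d) (Fin d) ℂ))
    (hEs : ∀ j, IsCPTP (Es j))
    (V : Matrix (Fin d) (Fin d) ℂ → ℝ)
    (hmono : ∀ j ρ, IsDensity ρ → V (Es j ρ) ≤ V ρ)
    (hcontract : ∀ ε > (0 : ℝ), ∃ (K : ℕ) (js : Fin K → Fin M), ∀ ρ, IsDensity ρ →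
      V ((List.ofFn fun k => Es (js k)).foldl (fun σ f => f σ) ρ) < ε)
    {Ω : Type*} [MeasurableSpace Ω] (P : Measure Ω)
    (J : ℕ → Ω → Fin M) (hJmeas : ∀ t, Measurable (J t))
    (hindep : iIndepFun J P)
    (ε₀ : ℝ) (hε₀ : 0 < ε₀) (hlow : ∀ t j, ENNReal.ofReal ε₀ ≤ P {ω | J t ω = j})
    (ρ₀ : Matrix (Fin d) (Fin d) ℂ) (hρ₀ : IsDensity ρ₀) :
    ∀ γ > (0 : ℝ),
      Tendsto (fun t : ℕ => P {ω | V (traj Es J ρ₀ t ω) < γ}) atTop (nhds 1) := by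
  intro γ hγ
  obtain ⟨K, js, hKγ⟩ := hcontract γ hγ
  set A : ℕ → Set Ω := fun t => {ω | V (traj Es J ρ₀ t ω) < γ}
  have hA : Monotone A := fun s t hst ω hω =>
    (antitone_traj hEs hmono hρ₀ ω hst).trans_lt hω
  have hblock : ∀ n, blockEq J js n ⊆ A (n * K + K) := fun n ω hω => by
    have hJ : (fun k : Fin K => Es (J (n * K + k) ω)) = fun k => Es (js k) := funext fun k => by
      rw [hω k]
    simpa only [A, Set.mem_ofPred_eq, traj_add, hJ] using hKγ _ (isDensity_traj hEs hρ₀ _ ω)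
  have hfull : P (⋃ t, A t) = 1 := by
    have := hindep.isProbabilityMeasure
    refine le_antisymm prob_le_one ?_
    calc 1 = P (⋃ n, blockEq J js n) := (hindep.measure_iUnion_blockEq_eq_one hJmeas
          (ENNReal.ofReal_pos.mpr hε₀).ne' hlow js).symm
      _ ≤ P (⋃ t, A t) := measure_mono (Set.iUnion_mono' fun n => ⟨_, hblock n⟩)
  exact hfull ▸ tendsto_measure_iUnion_atTop hA

/-- Convergence in probability for randomized sequences of CPTP maps: if a Lyapunov
function `V` vanishing exactly on `S` is non-increasing under each map and can be made
arbitrarily small by some finite sequence of the maps, and the maps are selected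
independently at random with probabilities uniformly bounded below, then
`P(V(ρ(t)) < γ) → 1` for every `γ > 0`. -/
theorem randomized_lyapunov_convergence_in_probability {d M : ℕ}
    (Es : Fin M → (Matrix (Fin d) (Fin d) ℂ → Matrix (Fin d) (Fin d) ℂ))
    (hEs : ∀ j, IsCPTP (Es j))
    (S : Set (Matrix (Fin d) (Fin d) ℂ)) (V : Matrix (Fin d) (Fin d) ℂ → ℝ)
    (hV0 : ∀ ρ, IsDensity ρ → 0 ≤ V ρ)
    (hVS : ∀ ρ, IsDensity ρ → (V ρ = 0 ↔ ρ ∈ S))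
    (hmono : ∀ j ρ, IsDensity ρ → V (Es j ρ) ≤ V ρ)
    (hcontract : ∀ ε > (0 : ℝ), ∃ (K : ℕ) (js : Fin K → Fin M), ∀ ρ, IsDensity ρ →
      V ((List.ofFn fun k => Es (js k)).foldl (fun σ f => f σ) ρ) < ε)
    {Ω : Type*} [MeasurableSpace Ω] (P : Measure Ω) [IsProbabilityMeasure P]
    (J : ℕ → Ω → Fin M) (hJmeas : ∀ t, Measurable (J t))
    (hindep : iIndepFun J P)
    (ε₀ : ℝ) (hε₀ : 0 < ε₀) (hlow : ∀ t j, ENNReal.ofReal ε₀ ≤ P {ω | J t ω = j})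
    (ρ₀ : Matrix (Fin d) (Fin d) ℂ) (hρ₀ : IsDensity ρ₀) :
    ∀ γ > (0 : ℝ),
      Tendsto (fun t : ℕ => P {ω | V (traj Es J ρ₀ t ω) < γ}) atTop (nhds 1) :=
  randomized_lyapunov_convergence_in_probability_general Es hEs V hmono hcontract P J hJmeas hindep
    ε₀ hε₀ hlow ρ₀ hρ₀
end

section
/- Let V_A and V_B be finite-dimensional complex vector spaces, let v ∈ V_A ⊗ V_B, let M_A be a linear operator on V_A, and let λ ∈ ℂ. If (M_A ⊗ Id_B) v = λ v, then (M_A ⊗ Id_B) v' = λ v' for every v' ∈ Σ_A(v) ⊗ V_B; equivalently, M_A w = λ w for every w in the Schmidt span Σ_A(v). -/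
open TensorProduct

/-- The Schmidt span of `v ∈ V_A ⊗ V_B`: the smallest subspace `W` of `V_A` such that
`v ∈ W ⊗ V_B` (viewed inside `V_A ⊗ V_B` via the inclusion `W ⊗ V_B → V_A ⊗ V_B`). -/
noncomputable def schmidtSpan {VA VB : Type*} [AddCommGroup VA] [Module ℂ VA]
    [AddCommGroup VB] [Module ℂ VB] (v : VA ⊗[ℂ] VB) : Submodule ℂ VA :=
  sInf {W : Submodule ℂ VA |
    v ∈ LinearMap.range (TensorProduct.map W.subtype (LinearMap.id : VB →ₗ[ℂ] VB))}

namespace Module.End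

variable {R M N : Type*}

/-- Tensoring with a flat module is exact on `0 → ker (f - μ) → M → M`, so an eigenvector of
`f ⊗ id` lies in `eigenspace f μ ⊗ N`. -/
lemma mem_range_rTensor_eigenspace_subtype [CommRing R] [AddCommGroup M] [AddCommGroup N]
    [Module R M] [Module R N] [Module.Flat R N] (f : End R M) (μ : R) {x : M ⊗[R] N}
    (hx : f.rTensor N x = μ • x) :
    x ∈ LinearMap.range ((f.eigenspace μ).subtype.rTensor N) := by
  have hexact := Module.Flat.rTensor_exact N (LinearMap.exact_subtype_ker_map (f - μ • 1))
  rw [eigenspace_def, ← hexact.linearMap_ker_eq, LinearMap.mem_ker, LinearMap.rTensor_sub,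
    LinearMap.rTensor_smul, LinearMap.sub_apply, hx, LinearMap.smul_apply, Module.End.one_eq_id,
    LinearMap.rTensor_id_apply, sub_self]

lemma rTensor_apply_eq_smul_of_mem_range [CommRing R] [AddCommGroup M] [AddCommMonoid N]
    [Module R M] [Module R N] {f : End R M} {μ : R} {W : Submodule R M} (hW : W ≤ f.eigenspace μ) {x : M ⊗[R] N}
    (hx : x ∈ LinearMap.range (W.subtype.rTensor N)) : f.rTensor N x = μ • x := by
  obtain ⟨y, rfl⟩ := hx
  have hfW : f ∘ₗ W.subtype = μ • W.subtype :=
    LinearMap.ext fun w => mem_eigenspace_iff.mp (hW w.2)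
  rw [← LinearMap.comp_apply, ← LinearMap.rTensor_comp, hfW, LinearMap.rTensor_smul,
    LinearMap.smul_apply]

end Module.End

theorem schmidtSpan_eigenvector_general {VA VB : Type*}
    [AddCommGroup VA] [Module ℂ VA]
    [AddCommGroup VB] [Module ℂ VB]
    (v : VA ⊗[ℂ] VB) (MA : VA →ₗ[ℂ] VA) (lam : ℂ)
    (hv : TensorProduct.map MA (LinearMap.id : VB →ₗ[ℂ] VB) v = lam • v) :
    (∀ w ∈ schmidtSpan v, MA w = lam • w) ∧
    (∀ v' ∈ LinearMap.range
        (TensorProduct.map (schmidtSpan v).subtype (LinearMap.id : VB →ₗ[ℂ] VB)),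
      TensorProduct.map MA (LinearMap.id : VB →ₗ[ℂ] VB) v' = lam • v') := by
  have hle : schmidtSpan v ≤ Module.End.eigenspace MA lam :=
    sInf_le (Module.End.mem_range_rTensor_eigenspace_subtype MA lam hv)
  exact ⟨fun w hw => Module.End.mem_eigenspace_iff.mp (hle hw),
    fun v' hv' => Module.End.rTensor_apply_eq_smul_of_mem_range hle hv'⟩

/-- If `(M_A ⊗ Id) v = λ • v`, then `M_A w = λ • w` for every `w` in the Schmidt span
`Σ_A(v)`; equivalently, `(M_A ⊗ Id) v' = λ • v'` for every `v' ∈ Σ_A(v) ⊗ V_B`. -/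
theorem schmidtSpan_eigenvector {VA VB : Type*}
    [AddCommGroup VA] [Module ℂ VA] [FiniteDimensional ℂ VA]
    [AddCommGroup VB] [Module ℂ VB] [FiniteDimensional ℂ VB]
    (v : VA ⊗[ℂ] VB) (MA : VA →ₗ[ℂ] VA) (lam : ℂ)
    (hv : TensorProduct.map MA (LinearMap.id : VB →ₗ[ℂ] VB) v = lam • v) :
    (∀ w ∈ schmidtSpan v, MA w = lam • w) ∧
    (∀ v' ∈ LinearMap.range
        (TensorProduct.map (schmidtSpan v).subtype (LinearMap.id : VB →ₗ[ℂ] VB)),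
      TensorProduct.map MA (LinearMap.id : VB →ₗ[ℂ] VB) v' = lam • v') :=
  schmidtSpan_eigenvector_general v MA lam hv
end

section
/- Let ψ ∈ ℂ^{d_A} ⊗ ℂ^{d_B} be a unit vector and ρ = ψψ* the corresponding pure-state density matrix. Then the operator Schmidt span of ρ with respect to the first factor equals the full matrix algebra on the support of the reduced state: Σ_A(ρ) = {X ∈ M_{d_A} : Π X Π = X}, where Π is the orthogonal projection onto the range of the partial trace Tr_B(ρ) (given entrywise by (Tr_B ρ)_{a,a'} = Σ_b ρ_{(a,b),(a',b)}). -/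
open Matrix
open scoped ComplexOrder Kronecker

/-- The subspace `W ⊗ M_{d_B}` of matrices on `ℂ^{d_A} ⊗ ℂ^{d_B}`: the span of Kronecker
products `A ⊗ₖ B` with `A ∈ W`. -/
noncomputable def tensorExt {dA dB : ℕ} (W : Submodule ℂ (Matrix (Fin dA) (Fin dA) ℂ)) :
    Submodule ℂ (Matrix (Fin dA × Fin dB) (Fin dA × Fin dB) ℂ) :=
  Submodule.span ℂ {Z | ∃ A ∈ W, ∃ B : Matrix (Fin dB) (Fin dB) ℂ, Z = A ⊗ₖ B}

/-- The operator Schmidt span `Σ_A(ρ)` of a matrix on `ℂ^{d_A} ⊗ ℂ^{d_B}`: the smallest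
subspace `W` of `M_{d_A}` with `ρ ∈ W ⊗ M_{d_B}`. -/
noncomputable def opSchmidtSpan {dA dB : ℕ}
    (ρ : Matrix (Fin dA × Fin dB) (Fin dA × Fin dB) ℂ) :
    Submodule ℂ (Matrix (Fin dA) (Fin dA) ℂ) :=
  sInf {W | ρ ∈ tensorExt (dB := dB) W}

/-- The partial trace over the second tensor factor. -/
noncomputable def ptraceB {dA dB : ℕ} (ρ : Matrix (Fin dA × Fin dB) (Fin dA × Fin dB) ℂ) :
    Matrix (Fin dA) (Fin dA) ℂ :=
  Matrix.of fun a a' => ∑ b, ρ (a, b) (a', b)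

/-!
Reshape `ψ` into the `d_A × d_B` matrix `M`. The `(b, b')` block of `ρ = ψψ*` is
`M E_{bb'} Mᴴ`, so `Σ_A(ρ) = {M Y Mᴴ | Y}`, and `Tr_B ρ = M Mᴴ` has the same range as `M`.
Hence the projection `Π` factors as `Π = M N`, so `X = Π X Π` gives `X = M (N X Nᴴ) Mᴴ`;
conversely `Π M = M` gives `Π (M Y Mᴴ) Π = M Y Mᴴ`.
-/

namespace Matrix

variable {l m n R : Type*}

theorem exists_eq_mul_of_range_le [Fintype m] [Fintype n] [CommSemiring R]
    {A : Matrix l n R} {B : Matrix l m R}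
    (h : LinearMap.range A.mulVecLin ≤ LinearMap.range B.mulVecLin) :
    ∃ N : Matrix m n R, A = B * N := by
  classical
  choose N hN using fun j => h ⟨Pi.single j 1, rfl⟩
  refine ⟨(of N)ᵀ, ?_⟩
  ext i j
  have hcol := congrFun (hN j) i
  simp only [mulVecLin_apply, mulVec_single_one] at hcol
  simpa [mul_apply, mulVec, dotProduct] using hcol.symm

theorem mul_eq_of_range_le [Fintype m] [Fintype n] [CommSemiring R]
    {P : Matrix m m R} {M : Matrix m n R} (hP : P * P = P)
    (h : LinearMap.range M.mulVecLin ≤ LinearMap.range P.mulVecLin) : P * M = M := by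
  obtain ⟨N, rfl⟩ := exists_eq_mul_of_range_le h
  rw [← Matrix.mul_assoc, hP]

theorem range_mulVecLin_self_mul_conjTranspose [Fintype m] [Fintype n] [Field R] [PartialOrder R]
    [StarRing R] [StarOrderedRing R] (A : Matrix m n R) :
    LinearMap.range (A * Aᴴ).mulVecLin = LinearMap.range A.mulVecLin := by
  refine Submodule.eq_of_le_of_finrank_eq ?_ (rank_self_mul_conjTranspose A)
  rw [mulVecLin_mul]
  exact LinearMap.range_comp_le_range _ _

def conjMulLinearMap [Fintype n] [CommSemiring R] [StarRing R] (M : Matrix m n R) :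
    Matrix n n R →ₗ[R] Matrix m m R where
  toFun Y := M * Y * Mᴴ
  map_add' Y Z := by rw [Matrix.mul_add, Matrix.add_mul]
  map_smul' c Y := by rw [Matrix.mul_smul, Matrix.smul_mul]; rfl

theorem range_conjMulLinearMap [Fintype n] [DecidableEq n] [CommSemiring R] [StarRing R]
    (M : Matrix m n R) :
    LinearMap.range (conjMulLinearMap M) =
      Submodule.span R (Set.range fun p : n × n => M * single p.1 p.2 (1 : R) * Mᴴ) := by
  rw [LinearMap.range_eq_map, ← (stdBasis R n n).span_eq, Submodule.map_span, ← Set.range_comp]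
  congr 2
  ext ⟨i, j⟩ : 1
  simp [conjMulLinearMap, stdBasis_eq_single]

theorem mul_mul_eq_self_iff_mem_range_conjMulLinearMap [Fintype m] [Fintype n] [CommRing R]
    [StarRing R] {P : Matrix m m R} {M : Matrix m n R} (hPH : Pᴴ = P) (hP : P * P = P)
    (hPM : LinearMap.range P.mulVecLin = LinearMap.range M.mulVecLin) (X : Matrix m m R) :
    P * X * P = X ↔ X ∈ LinearMap.range (conjMulLinearMap M) := by
  constructor
  · intro hX
    obtain ⟨N, hN⟩ := exists_eq_mul_of_range_le hPM.le
    refine ⟨N * X * Nᴴ, ?_⟩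
    calc M * (N * X * Nᴴ) * Mᴴ = P * X * Pᴴ := by
          simp only [hN, conjTranspose_mul, Matrix.mul_assoc]
      _ = X := by rw [hPH, hX]
  · rintro ⟨Y, rfl⟩
    have hPM' : P * M = M := mul_eq_of_range_le hP hPM.ge
    have hMP : Mᴴ * P = Mᴴ := by rw [← hPH, ← conjTranspose_mul, hPM']
    change P * (M * Y * Mᴴ) * P = M * Y * Mᴴ
    rw [← Matrix.mul_assoc, ← Matrix.mul_assoc, hPM', Matrix.mul_assoc, hMP]

end Matrix

section Blocks

variable {dA dB : ℕ}

def blockB (b b' : Fin dB) :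
    Matrix (Fin dA × Fin dB) (Fin dA × Fin dB) ℂ →ₗ[ℂ] Matrix (Fin dA) (Fin dA) ℂ where
  toFun Z := Z.submatrix (·, b) (·, b')
  map_add' _ _ := rfl
  map_smul' _ _ := rfl

@[simp]
theorem blockB_apply (b b' : Fin dB) (Z : Matrix (Fin dA × Fin dB) (Fin dA × Fin dB) ℂ)
    (a a' : Fin dA) : blockB b b' Z a a' = Z (a, b) (a', b') := rfl

theorem blockB_kronecker (A : Matrix (Fin dA) (Fin dA) ℂ) (B : Matrix (Fin dB) (Fin dB) ℂ)
    (b b' : Fin dB) : blockB b b' (A ⊗ₖ B) = B b b' • A := by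
  ext a a'
  simp [mul_comm]

theorem tensorExt_le_comap_blockB (W : Submodule ℂ (Matrix (Fin dA) (Fin dA) ℂ))
    (b b' : Fin dB) : tensorExt W ≤ W.comap (blockB b b') := by
  refine Submodule.span_le.mpr ?_
  rintro _ ⟨A, hA, B, rfl⟩
  simpa [blockB_kronecker] using W.smul_mem (B b b') hA

theorem eq_sum_blockB_kronecker (Z : Matrix (Fin dA × Fin dB) (Fin dA × Fin dB) ℂ) :
    Z = ∑ b, ∑ b', blockB b b' Z ⊗ₖ single b b' (1 : ℂ) := by
  ext ⟨a, c⟩ ⟨a', c'⟩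
  simp [Matrix.sum_apply, single_apply, ite_and]

theorem opSchmidtSpan_eq_span_blockB (Z : Matrix (Fin dA × Fin dB) (Fin dA × Fin dB) ℂ) :
    opSchmidtSpan Z =
      Submodule.span ℂ (Set.range fun p : Fin dB × Fin dB => blockB p.1 p.2 Z) := by
  refine le_antisymm (sInf_le ?_) (le_sInf fun W hW => ?_)
  · have hsum : ∑ b, ∑ b', blockB b b' Z ⊗ₖ single b b' (1 : ℂ) ∈ tensorExt
        (Submodule.span ℂ (Set.range fun p : Fin dB × Fin dB => blockB p.1 p.2 Z)) :=
      Submodule.sum_mem _ fun b _ => Submodule.sum_mem _ fun b' _ =>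
        Submodule.subset_span ⟨_, Submodule.subset_span ⟨(b, b'), rfl⟩, _, rfl⟩
    rwa [← eq_sum_blockB_kronecker] at hsum
  · rw [Submodule.span_le]
    rintro _ ⟨⟨b, b'⟩, rfl⟩
    exact tensorExt_le_comap_blockB W b b' hW

theorem blockB_vecMulVec_star (ψ : Fin dA × Fin dB → ℂ) (b b' : Fin dB) :
    blockB b b' (vecMulVec ψ (star ψ)) =
      of (Function.curry ψ) * single b b' (1 : ℂ) * (of (Function.curry ψ))ᴴ := by
  ext a a'
  simp [vecMulVec_apply, mul_apply, single_apply, ite_and]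

theorem ptraceB_vecMulVec_star (ψ : Fin dA × Fin dB → ℂ) :
    ptraceB (vecMulVec ψ (star ψ)) = of (Function.curry ψ) * (of (Function.curry ψ))ᴴ := by
  ext a a'
  simp [ptraceB, vecMulVec_apply, mul_apply]

end Blocks

theorem opSchmidtSpan_of_pure_state_general {dA dB : ℕ}
    (ψ : Fin dA × Fin dB → ℂ)
    (ρ : Matrix (Fin dA × Fin dB) (Fin dA × Fin dB) ℂ)
    (hρ : ρ = Matrix.of fun i j => ψ i * star (ψ j))
    (Pr : Matrix (Fin dA) (Fin dA) ℂ)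
    (hPr : Prᴴ = Pr ∧ Pr * Pr = Pr ∧
      LinearMap.range Pr.mulVecLin = LinearMap.range (ptraceB ρ).mulVecLin) :
    ∀ X : Matrix (Fin dA) (Fin dA) ℂ, X ∈ opSchmidtSpan ρ ↔ Pr * X * Pr = X := by
  obtain ⟨hPrH, hPr2, hPrRange⟩ := hPr
  replace hρ : ρ = vecMulVec ψ (star ψ) := hρ
  subst hρ
  rw [ptraceB_vecMulVec_star, range_mulVecLin_self_mul_conjTranspose] at hPrRange
  intro X
  rw [mul_mul_eq_self_iff_mem_range_conjMulLinearMap hPrH hPr2 hPrRange, range_conjMulLinearMap,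
    opSchmidtSpan_eq_span_blockB]
  simp only [blockB_vecMulVec_star]

/-- For a pure state `ρ = ψψ*`, the operator Schmidt span with respect to the first factor
is the full matrix algebra on the support of the reduced state: `Σ_A(ρ) = {X | Pr X Pr = X}`,
where `Pr` is the orthogonal projection onto the range of `Tr_B(ρ)`. -/
theorem opSchmidtSpan_of_pure_state {dA dB : ℕ}
    (ψ : Fin dA × Fin dB → ℂ) (hψ : ∑ i, ψ i * star (ψ i) = 1)
    (ρ : Matrix (Fin dA × Fin dB) (Fin dA × Fin dB) ℂ)
    (hρ : ρ = Matrix.of fun i j => ψ i * star (ψ j))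
    (Pr : Matrix (Fin dA) (Fin dA) ℂ)
    (hPr : Prᴴ = Pr ∧ Pr * Pr = Pr ∧
      LinearMap.range Pr.mulVecLin = LinearMap.range (ptraceB ρ).mulVecLin) :
    ∀ X : Matrix (Fin dA) (Fin dA) ℂ, X ∈ opSchmidtSpan ρ ↔ Pr * X * Pr = X :=
  opSchmidtSpan_of_pure_state_general ψ ρ hρ Pr hPr
end

section
/- Let d_S, d_F ≥ 1, let τ be a density matrix on ℂ^{d_F}, and define the linear map E on matrices over ℂ^{d_S} ⊗ ℂ^{d_F} by E(X) = Tr_F(X) ⊗ τ, where Tr_F is the partial trace over the second factor. Then E is self-adjoint with respect to the Hilbert–Schmidt inner product ⟨A,B⟩ = Tr(A*B) — equivalently, E coincides with the Hilbert–Schmidt-orthogonal projection onto the subspace {A ⊗ τ : A ∈ M_{d_S}} — if and only if τ = I/d_F is the maximally mixed state. -/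
/-!
The partial trace is the Hilbert–Schmidt adjoint of `Y ↦ Y ⊗ 1`, so for `τ = I / d_F` both sides
of the self-adjointness identity equal `d_F⁻¹ Tr((Tr_F A)ᴴ Tr_F B)`. Conversely, testing the
identity on `A = 1 ⊗ 1` and `B = 1 ⊗ M` gives `d_F Tr(τᴴ M) = Tr M` for every `M`, which pins
down `τ = I / d_F`.
-/

open Matrix
open scoped ComplexOrder Kronecker

/-- The partial trace over the second tensor factor. -/
noncomputable def ptraceF {dS dF : ℕ}
    (X : Matrix (Fin dS × Fin dF) (Fin dS × Fin dF) ℂ) : Matrix (Fin dS) (Fin dS) ℂ :=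
  Matrix.of fun s s' => ∑ f, X (s, f) (s', f)

section PartialTrace

variable {dS dF : ℕ}

lemma ptraceF_kronecker (Y : Matrix (Fin dS) (Fin dS) ℂ) (M : Matrix (Fin dF) (Fin dF) ℂ) :
    ptraceF (Y ⊗ₖ M) = M.trace • Y := by
  ext s s'
  simp [ptraceF, trace, Finset.sum_mul, mul_comm (Y s s')]

lemma ptraceF_conjTranspose (A : Matrix (Fin dS × Fin dF) (Fin dS × Fin dF) ℂ) :
    ptraceF Aᴴ = (ptraceF A)ᴴ := by
  ext s s'
  simp [ptraceF]

lemma trace_mul_kronecker_one (A : Matrix (Fin dS × Fin dF) (Fin dS × Fin dF) ℂ)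
    (Y : Matrix (Fin dS) (Fin dS) ℂ) :
    (A * (Y ⊗ₖ (1 : Matrix (Fin dF) (Fin dF) ℂ))).trace = (ptraceF A * Y).trace := by
  simp only [trace, diag, mul_apply, ptraceF, Fintype.sum_prod_type, kroneckerMap_apply,
    one_apply, mul_ite, mul_one, mul_zero, Finset.sum_ite_eq', Finset.mem_univ, if_true, of_apply,
    Finset.sum_mul]
  exact Finset.sum_congr rfl fun _ _ => Finset.sum_comm

lemma trace_conjTranspose_ptraceF_kronecker_smul_one_mul {c : ℂ} (hc : star c = c)
    (A B : Matrix (Fin dS × Fin dF) (Fin dS × Fin dF) ℂ) :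
    ((ptraceF A ⊗ₖ (c • (1 : Matrix (Fin dF) (Fin dF) ℂ)))ᴴ * B).trace =
      (Aᴴ * (ptraceF B ⊗ₖ (c • (1 : Matrix (Fin dF) (Fin dF) ℂ)))).trace := by
  rw [trace_mul_comm, conjTranspose_kronecker, conjTranspose_smul, hc, conjTranspose_one,
    kronecker_smul, ← smul_kronecker, kronecker_smul, ← smul_kronecker, trace_mul_kronecker_one,
    trace_mul_kronecker_one, ptraceF_conjTranspose, trace_mul_comm, mul_smul_comm, smul_mul_assoc]

lemma trace_conjTranspose_mul_of_ptraceF_kronecker_selfAdjoint (hdS : dS ≠ 0)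
    {τ : Matrix (Fin dF) (Fin dF) ℂ}
    (h : ∀ A B : Matrix (Fin dS × Fin dF) (Fin dS × Fin dF) ℂ,
      ((ptraceF A ⊗ₖ τ)ᴴ * B).trace = (Aᴴ * (ptraceF B ⊗ₖ τ)).trace)
    (M : Matrix (Fin dF) (Fin dF) ℂ) :
    dF * (τᴴ * M).trace = τ.trace * M.trace := by
  have h1 := h (1 ⊗ₖ 1) (1 ⊗ₖ M)
  rw [ptraceF_kronecker, ptraceF_kronecker, conjTranspose_kronecker, conjTranspose_kronecker,
    ← mul_kronecker_mul, ← mul_kronecker_mul, trace_kronecker, trace_kronecker] at h1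
  simp only [conjTranspose_smul, conjTranspose_one, one_mul, mul_one, trace_smul,
    trace_one, Fintype.card_fin, smul_eq_mul, star_natCast] at h1
  apply mul_left_cancel₀ (Nat.cast_ne_zero.mpr hdS : (dS : ℂ) ≠ 0)
  linear_combination h1

end PartialTrace

theorem ptrace_tensor_selfadjoint_iff_maximally_mixed_general {dS dF : ℕ}
    (hdS : 1 ≤ dS) (hdF : 1 ≤ dF)
    (τ : Matrix (Fin dF) (Fin dF) ℂ) (hτtr : τ.trace = 1) :
    (∀ A B : Matrix (Fin dS × Fin dF) (Fin dS × Fin dF) ℂ,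
      ((ptraceF A ⊗ₖ τ)ᴴ * B).trace = (Aᴴ * (ptraceF B ⊗ₖ τ)).trace) ↔
    τ = ((dF : ℂ))⁻¹ • (1 : Matrix (Fin dF) (Fin dF) ℂ) := by
  have hdF' : (dF : ℂ) ≠ 0 := Nat.cast_ne_zero.mpr (by omega)
  constructor
  · intro h
    suffices τᴴ = ((dF : ℂ))⁻¹ • 1 by
      rw [← conjTranspose_conjTranspose τ, this, conjTranspose_smul, conjTranspose_one, star_inv₀,
        star_natCast]
    refine ext_iff_trace_mul_right.mpr fun M => ?_
    have hM := trace_conjTranspose_mul_of_ptraceF_kronecker_selfAdjoint (by omega) h M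
    rw [hτtr, one_mul] at hM
    rw [smul_mul_assoc, one_mul, trace_smul, smul_eq_mul, ← hM, inv_mul_cancel_left₀ hdF']
  · rintro rfl
    exact trace_conjTranspose_ptraceF_kronecker_smul_one_mul (by simp)

/-- The map `E(X) = Tr_F(X) ⊗ τ` is self-adjoint with respect to the Hilbert–Schmidt
inner product `⟨A,B⟩ = Tr(AᴴB)` — equivalently, it is the HS-orthogonal projection onto
`{A ⊗ τ}` — if and only if `τ` is the maximally mixed state `I / d_F`. -/
theorem ptrace_tensor_selfadjoint_iff_maximally_mixed {dS dF : ℕ}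
    (hdS : 1 ≤ dS) (hdF : 1 ≤ dF)
    (τ : Matrix (Fin dF) (Fin dF) ℂ) (hτ : τ.PosSemidef) (hτtr : τ.trace = 1) :
    (∀ A B : Matrix (Fin dS × Fin dF) (Fin dS × Fin dF) ℂ,
      ((ptraceF A ⊗ₖ τ)ᴴ * B).trace = (Aᴴ * (ptraceF B ⊗ₖ τ)).trace) ↔
    τ = ((dF : ℂ))⁻¹ • (1 : Matrix (Fin dF) (Fin dF) ℂ) :=
  ptrace_tensor_selfadjoint_iff_maximally_mixed_general hdS hdF τ hτtr
end

section
/- (von Neumann–Halperin alternating projections) Let M_1,…,M_r be closed subspaces of a complex Hilbert space H, let P_{M_j} denote the orthogonal projection onto M_j, and let P denote the orthogonal projection onto ⋂_{i=1}^r M_i. Then for every x ∈ H, the iterates (P_{M_1} P_{M_2} ⋯ P_{M_r})^n x converge in norm to P x as n → ∞. -/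
/-!
An orthogonal projection `p` satisfies `‖p z‖² + ‖z - p z‖² = ‖z‖²`. Chaining this identity
through `T = P₁ ⋯ Pᵣ` with the triangle and Cauchy–Schwarz inequalities gives
`‖z - T z‖² ≤ r (‖z‖² - ‖T z‖²)`, and shows that `T` fixes exactly the vectors lying in every
`Mⱼ`. Since `‖Tⁿ x‖²` decreases, `Tⁿ x - Tⁿ⁺¹ x → 0`: the orbit of every vector of the form
`T y - y` tends to `0`, hence so does the orbit of every vector in the closure of the range of
`T - 1`. For a contraction that closure is the orthogonal complement of the fixed space, on which
`T` is the identity.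
-/

open Filter Topology

lemma add_sq_le_succ_mul_add {n a b s t : ℝ} (hn : 0 ≤ n) (ha : 0 ≤ a) (hs0 : 0 ≤ s)
    (hs : s ^ 2 ≤ n * a) (ht : t ^ 2 ≤ b) :
    (s + t) ^ 2 ≤ (n + 1) * (a + b) := by
  rcases hn.eq_or_lt with rfl | hn
  · obtain rfl : s = 0 := by nlinarith
    nlinarith
  · refine le_of_mul_le_mul_left ?_ hn
    have hnt : n * (n + 1) * t ^ 2 ≤ n * (n + 1) * b := by gcongr
    nlinarith [sq_nonneg (s - n * t)]

lemma List.foldr_apply_eq_self {α : Type*} {L : List (α → α)} {z : α}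
    (h : ∀ p ∈ L, p z = z) : L.foldr (fun f y => f y) z = z := by
  induction L with
  | nil => rfl
  | cons p L ih =>
    simp only [List.forall_mem_cons] at h
    simp only [List.foldr_cons, ih h.2, h.1]

lemma ContinuousLinearMap.list_prod_apply {R M : Type*} [Semiring R] [TopologicalSpace M]
    [AddCommMonoid M] [Module R M] (L : List (M →L[R] M)) (z : M) :
    L.prod z = (L.map (⇑)).foldr (fun f y => f y) z := by
  induction L with
  | nil => rfl
  | cons p L ih => simp [ih]

section SubPythagorean

variable {E : Type*} [SeminormedAddCommGroup E]

/-- For a linear map on an inner product space this is firm nonexpansiveness,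
`‖p z‖ ^ 2 ≤ re ⟪p z, z⟫`; orthogonal projections satisfy it with equality. -/
def IsSubPythagorean (p : E → E) : Prop :=
  ∀ z, ‖p z‖ ^ 2 + ‖z - p z‖ ^ 2 ≤ ‖z‖ ^ 2

lemma IsSubPythagorean.norm_apply_le {p : E → E} (hp : IsSubPythagorean p) (z : E) :
    ‖p z‖ ≤ ‖z‖ :=
  pow_le_pow_iff_left₀ (norm_nonneg _) (norm_nonneg _) two_ne_zero |>.1 <|
    by nlinarith [hp z, sq_nonneg ‖z - p z‖]

variable {L : List (E → E)}

lemma norm_foldr_apply_le (hL : ∀ p ∈ L, IsSubPythagorean p) (z : E) :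
    ‖L.foldr (fun f y => f y) z‖ ≤ ‖z‖ := by
  induction L with
  | nil => rfl
  | cons p L ih =>
    simp only [List.forall_mem_cons] at hL
    exact (hL.1.norm_apply_le _).trans (ih hL.2)

lemma norm_sub_foldr_apply_sq_le (hL : ∀ p ∈ L, IsSubPythagorean p) (z : E) :
    ‖z - L.foldr (fun f y => f y) z‖ ^ 2 ≤
      L.length * (‖z‖ ^ 2 - ‖L.foldr (fun f y => f y) z‖ ^ 2) := by
  induction L with
  | nil => simp
  | cons p L ih =>
    simp only [List.forall_mem_cons] at hL
    set w := L.foldr (fun f y => f y) z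
    have hwz : ‖w‖ ≤ ‖z‖ := norm_foldr_apply_le hL.2 z
    calc ‖z - p w‖ ^ 2 ≤ (‖z - w‖ + ‖w - p w‖) ^ 2 := by
          gcongr; exact norm_sub_le_norm_sub_add_norm_sub z w (p w)
      _ ≤ (L.length + 1) * ((‖z‖ ^ 2 - ‖w‖ ^ 2) + (‖w‖ ^ 2 - ‖p w‖ ^ 2)) :=
          add_sq_le_succ_mul_add (by positivity) (by nlinarith [norm_nonneg w])
            (norm_nonneg _) (ih hL.2) (by linarith [hL.1 w])
      _ = (p :: L).length * (‖z‖ ^ 2 - ‖p w‖ ^ 2) := by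
          push_cast [List.length_cons]; ring

lemma tendsto_iterate_sub_iterate_succ {f : E → E} {c : ℝ} (hf : ∀ z, ‖f z‖ ≤ ‖z‖)
    (hfc : ∀ z, ‖z - f z‖ ^ 2 ≤ c * (‖z‖ ^ 2 - ‖f z‖ ^ 2)) (x : E) :
    Tendsto (fun n => f^[n] x - f^[n + 1] x) atTop (𝓝 0) := by
  set a : ℕ → ℝ := fun n => ‖f^[n] x‖ ^ 2
  have ha : Antitone a := antitone_nat_of_succ_le fun n => by
    simp only [a, Function.iterate_succ_apply']
    exact pow_le_pow_left₀ (norm_nonneg _) (hf _) 2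
  have hlim : Tendsto a atTop (𝓝 (⨅ n, a n)) :=
    tendsto_atTop_ciInf ha ⟨0, by rintro _ ⟨n, rfl⟩; positivity⟩
  have hgap : Tendsto (fun n => c * (a n - a (n + 1))) atTop (𝓝 0) := by
    simpa using (hlim.sub (hlim.comp (tendsto_add_atTop_nat 1))).const_mul c
  have hsq : Tendsto (fun n => ‖f^[n] x - f^[n + 1] x‖ ^ 2) atTop (𝓝 0) :=
    squeeze_zero (fun _ => by positivity)
      (fun n => by simpa only [a, Function.iterate_succ_apply'] using hfc (f^[n] x)) hgap
  exact tendsto_zero_iff_norm_tendsto_zero.2 (by simpa using hsq.sqrt)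

end SubPythagorean

section SubPythagoreanFixedPoints

variable {E : Type*} [NormedAddCommGroup E]

lemma IsSubPythagorean.apply_eq_self_of_norm_le {p : E → E} (hp : IsSubPythagorean p) {z : E}
    (h : ‖z‖ ≤ ‖p z‖) : p z = z := by
  have : ‖z - p z‖ ^ 2 ≤ 0 := by nlinarith [hp z, norm_nonneg z]
  exact (sub_eq_zero.1 (norm_eq_zero.1 (by nlinarith [norm_nonneg (z - p z)]))).symm

variable {L : List (E → E)}

lemma forall_apply_eq_self_of_norm_le_norm_foldr_apply (hL : ∀ p ∈ L, IsSubPythagorean p)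
    {z : E} (h : ‖z‖ ≤ ‖L.foldr (fun f y => f y) z‖) : ∀ p ∈ L, p z = z := by
  induction L with
  | nil => simp
  | cons p L ih =>
    simp only [List.forall_mem_cons, List.foldr_cons] at hL h ⊢
    have hfix := ih hL.2 (h.trans (hL.1.norm_apply_le _))
    rw [List.foldr_apply_eq_self hfix] at h
    exact ⟨hL.1.apply_eq_self_of_norm_le h, hfix⟩

lemma foldr_apply_eq_self_iff (hL : ∀ p ∈ L, IsSubPythagorean p) {z : E} :
    L.foldr (fun f y => f y) z = z ↔ ∀ p ∈ L, p z = z :=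
  ⟨fun h => forall_apply_eq_self_of_norm_le_norm_foldr_apply hL (h.symm ▸ le_rfl),
    List.foldr_apply_eq_self⟩

end SubPythagoreanFixedPoints

section InnerProductSpace

variable {𝕜 E : Type*} [RCLike 𝕜] [NormedAddCommGroup E] [InnerProductSpace 𝕜 E]

lemma Submodule.isSubPythagorean_starProjection (K : Submodule 𝕜 E) [K.HasOrthogonalProjection] :
    IsSubPythagorean (K.starProjection : E → E) := fun z => by
  rw [K.norm_sq_eq_add_norm_sq_starProjection z, K.starProjection_orthogonal_val]

namespace ContinuousLinearMap

variable [CompleteSpace E]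

/-- A vector `x` orthogonal to the range of `f - 1` satisfies `⟪f x, x⟫ = ‖x‖ ^ 2`, which for a
contraction forces `f x = x`. -/
theorem orthogonal_eqLocus_le_topologicalClosure_range (f : E →L[𝕜] E) (hf : ‖f‖ ≤ 1) :
    (f.eqLocus (1 : E →L[𝕜] E))ᗮ ≤ ((f - 1 : E →L[𝕜] E).range).topologicalClosure := by
  rw [← Submodule.orthogonal_orthogonal_eq_closure]
  refine Submodule.orthogonal_le fun x hx ↦ LinearMap.mem_eqLocus.2 ?_
  refine eq_of_norm_le_re_inner_eq_norm_sq (𝕜 := 𝕜) ?_ ?_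
  · simpa using f.le_of_opNorm_le hf x
  · have : ∀ y, inner 𝕜 (f y) x = inner 𝕜 y x := by
      simpa [Submodule.mem_orthogonal, inner_sub_left, sub_eq_zero] using hx
    simp [this]

theorem tendsto_iterate_starProjection_eqLocus (f : E →L[𝕜] E) (hf : ‖f‖ ≤ 1)
    (hreg : ∀ x, Tendsto (fun n => f^[n] x - f^[n + 1] x) atTop (𝓝 0)) (x : E) :
    Tendsto (f^[·] x) atTop (𝓝 ((f.eqLocus (1 : E →L[𝕜] E)).starProjection x)) := by
  set S := f.eqLocus (1 : E →L[𝕜] E)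
  have hlip : LipschitzWith 1 f := f.lipschitz.weaken hf
  have hclosed : IsClosed {y | Tendsto (f^[·] y) atTop (𝓝 0)} :=
    (LipschitzWith.uniformEquicontinuous _ 1 fun n => by simpa using hlip.iterate n
      ).equicontinuous.isClosed_setOfPred_tendsto continuous_const
  have hrange :
      ((f - 1 : E →L[𝕜] E).range : Set E) ⊆ {y | Tendsto (f^[·] y) atTop (𝓝 0)} := by
    rintro _ ⟨y, rfl⟩
    have h (n : ℕ) :
        f^[n] (((f - 1 : E →L[𝕜] E) : E →ₗ[𝕜] E) y) = -(f^[n] y - f^[n + 1] y) := by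
      change f^[n] (f y - y) = _
      rw [iterate_map_sub f, ← Function.iterate_succ_apply, neg_sub]
    simpa only [Set.mem_ofPred_eq, h, neg_zero] using (hreg y).neg
  have hperp : x - S.starProjection x ∈ closure ((f - 1 : E →L[𝕜] E).range : Set E) := by
    rw [← Submodule.topologicalClosure_coe]
    exact f.orthogonal_eqLocus_le_topologicalClosure_range hf
      (S.sub_starProjection_mem_orthogonal x)
  have hfixed (n : ℕ) : f^[n] (S.starProjection x) = S.starProjection x :=
    Function.iterate_fixed (LinearMap.mem_eqLocus.1 (S.starProjection_apply_mem x)) n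
  have hcompl : Tendsto (f^[·] (x - S.starProjection x)) atTop (𝓝 0) :=
    closure_minimal hrange hclosed hperp
  simpa only [iterate_map_sub f, hfixed, sub_add_cancel, zero_add] using
    hcompl.add_const (S.starProjection x)

end ContinuousLinearMap

namespace Submodule

variable (K : Submodule 𝕜 E) {p : E → E}

lemma HasOrthogonalProjection.of_forall_inner_sub_eq_zero
    (hp : ∀ x, p x ∈ K ∧ ∀ y ∈ K, inner 𝕜 (x - p x) y = 0) : K.HasOrthogonalProjection :=
  ⟨fun v => ⟨p v, (hp v).1, (K.mem_orthogonal' _).2 (hp v).2⟩⟩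

lemma coe_starProjection_eq_of_forall_inner_sub_eq_zero [K.HasOrthogonalProjection]
    (hp : ∀ x, p x ∈ K ∧ ∀ y ∈ K, inner 𝕜 (x - p x) y = 0) : ⇑K.starProjection = p :=
  funext fun x => K.eq_starProjection_of_mem_of_inner_eq_zero (hp x).1 (hp x).2

end Submodule

section ProductOfProjections

variable {r : ℕ} (K : Fin r → Submodule 𝕜 E) [∀ j, (K j).HasOrthogonalProjection]

lemma list_prod_starProjection_apply (z : E) :
    (List.ofFn fun j => (K j).starProjection).prod z =
      (List.ofFn fun j => ⇑(K j).starProjection).foldr (fun f y => f y) z := by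
  simp only [ContinuousLinearMap.list_prod_apply, List.map_ofFn]
  rfl

lemma isSubPythagorean_of_mem_ofFn_starProjection :
    ∀ p ∈ List.ofFn fun j => ⇑(K j).starProjection, IsSubPythagorean p := by
  simpa [List.mem_ofFn] using fun j => (K j).isSubPythagorean_starProjection

lemma eqLocus_list_prod_starProjection :
    (List.ofFn fun j => (K j).starProjection).prod.eqLocus (1 : E →L[𝕜] E) = ⨅ j, K j := by
  ext z
  simp [LinearMap.mem_eqLocus, list_prod_starProjection_apply,
    foldr_apply_eq_self_iff (isSubPythagorean_of_mem_ofFn_starProjection K), Submodule.mem_iInf,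
    List.mem_ofFn, Submodule.starProjection_eq_self_iff]

theorem tendsto_iterate_list_prod_starProjection [CompleteSpace E]
    [(⨅ j, K j).HasOrthogonalProjection] (x : E) :
    Tendsto (fun n => (⇑(List.ofFn fun j => (K j).starProjection).prod)^[n] x) atTop
      (𝓝 ((⨅ j, K j).starProjection x)) := by
  set T := (List.ofFn fun j => (K j).starProjection).prod
  have hK := isSubPythagorean_of_mem_ofFn_starProjection K
  have hT : ∀ z, ‖T z‖ ≤ ‖z‖ := by
    simpa only [T, list_prod_starProjection_apply] using norm_foldr_apply_le hK
  have hreg := tendsto_iterate_sub_iterate_succ hT (c := r) <| by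
    simpa [T, list_prod_starProjection_apply] using norm_sub_foldr_apply_sq_le hK
  have := T.tendsto_iterate_starProjection_eqLocus
    (T.opNorm_le_bound zero_le_one fun z => by simpa using hT z) hreg x
  simpa only [T, eqLocus_list_prod_starProjection] using this

end ProductOfProjections

end InnerProductSpace

theorem vonNeumann_halperin_alternating_projections_general
    {H : Type*} [NormedAddCommGroup H] [InnerProductSpace ℂ H] [CompleteSpace H]
    {r : ℕ} (M : Fin r → Submodule ℂ H)
    (P : Fin r → H → H)
    (hP : ∀ j x, P j x ∈ M j ∧ ∀ y ∈ M j, inner ℂ (x - P j x) y = (0 : ℂ))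
    (Q : H → H)
    (hQ : ∀ x, Q x ∈ (⨅ i, M i) ∧ ∀ y ∈ (⨅ i, M i), inner ℂ (x - Q x) y = (0 : ℂ)) :
    ∀ x : H,
      Tendsto (fun n : ℕ => (fun z => (List.ofFn P).foldr (fun f y => f y) z)^[n] x)
        atTop (nhds (Q x)) := by
  have (j : Fin r) := Submodule.HasOrthogonalProjection.of_forall_inner_sub_eq_zero _ (hP j)
  have := Submodule.HasOrthogonalProjection.of_forall_inner_sub_eq_zero _ hQ
  obtain rfl : P = fun j => ⇑(M j).starProjection :=
    funext fun j => ((M j).coe_starProjection_eq_of_forall_inner_sub_eq_zero (hP j)).symm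
  obtain rfl := (⨅ i, M i).coe_starProjection_eq_of_forall_inner_sub_eq_zero hQ
  simpa only [← list_prod_starProjection_apply] using tendsto_iterate_list_prod_starProjection M

/-- von Neumann–Halperin alternating projections: if `M 0, …, M (r-1)` are closed
subspaces of a complex Hilbert space `H`, `P j` is the orthogonal projection onto `M j`
(characterized by `P j x ∈ M j` and `x - P j x ⟂ M j`), and `Q` is the orthogonal
projection onto `⋂ j, M j`, then for every `x ∈ H` the iterates
`(P_{M_1} P_{M_2} ⋯ P_{M_r})ⁿ x` converge in norm to `Q x`. -/
theorem vonNeumann_halperin_alternating_projections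
    {H : Type*} [NormedAddCommGroup H] [InnerProductSpace ℂ H] [CompleteSpace H]
    {r : ℕ} (M : Fin r → Submodule ℂ H) (hM : ∀ j, IsClosed (M j : Set H))
    (P : Fin r → H → H)
    (hP : ∀ j x, P j x ∈ M j ∧ ∀ y ∈ M j, inner ℂ (x - P j x) y = (0 : ℂ))
    (Q : H → H)
    (hQ : ∀ x, Q x ∈ (⨅ i, M i) ∧ ∀ y ∈ (⨅ i, M i), inner ℂ (x - Q x) y = (0 : ℂ)) :
    ∀ x : H,
      Tendsto (fun n : ℕ => (fun z => (List.ofFn P).foldr (fun f y => f y) z)^[n] x)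
        atTop (nhds (Q x)) :=
  vonNeumann_halperin_alternating_projections_general M P hP Q hQ
end
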